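/- arXiv:1711.09209 — 3 statements merged into one kernel-verified Lean document; each statement's English description precedes it below -/
import Mathlib

section
/- Every torsion-free subgroup of G (i.e. every subgroup in which no element other than the identity has finite order) is a free group. -/
noncomputable section

/-- `G` is the free product `(ℤ/2ℤ) * (ℤ/3ℤ)`. -/
abbrev G : Type := Monoid.Coprod (Multiplicative (ZMod 2)) (Multiplicative (ZMod 3))

namespace TFS

open Monoid

def α : G := Coprod.inl (Multiplicative.ofAdd 1)
def β (x : ZMod 3) : G := Coprod.inr (Multiplicative.ofAdd x)

lemma α_mul_α : α * α = 1 := by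
  rw [α, ← MonoidHom.map_mul, ← ofAdd_add]
  have : (1 + 1 : ZMod 2) = 0 := by decide
  rw [this, ofAdd_zero, MonoidHom.map_one]

lemma β_mul_β (x y : ZMod 3) : β x * β y = β (x + y) := by
  rw [β, β, β, ← MonoidHom.map_mul, ← ofAdd_add]

lemma β_zero : β 0 = 1 := by
  rw [β, ofAdd_zero, MonoidHom.map_one]

/-- letters -/
inductive Lt : Type
  | a : Lt
  | b (x : ZMod 3) : Lt
  deriving DecidableEq

def Lt.isA : Lt → Bool
  | .a => true
  | .b _ => false

/-- the property of being a reduced word -/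
def NFP (l : List Lt) : Prop :=
  l.Chain' (fun c d => c.isA ≠ d.isA) ∧ ∀ c ∈ l, c ≠ Lt.b 0

abbrev NF : Type := {l : List Lt // NFP l}

def emptyNF : NF := ⟨[], by constructor <;> simp [List.Chain']⟩

def elt : Lt → G
  | .a => α
  | .b x => β x

def evalL (l : List Lt) : G := (l.map elt).prod

def evalW (l : NF) : G := evalL l.1

@[simp] lemma evalL_nil : evalL [] = 1 := rfl
@[simp] lemma evalL_cons (c : Lt) (t : List Lt) : evalL (c :: t) = elt c * evalL t := by
  simp [evalL]

/-- prepend the letter `a` -/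
def paL : List Lt → List Lt
  | .a :: t => t
  | l => .a :: l

/-- prepend the letter `b x` (assuming `x ≠ 0`) -/
def pbL (x : ZMod 3) : List Lt → List Lt
  | .b y :: t => if x + y = 0 then t else .b (x + y) :: t
  | l => .b x :: l

lemma paL_a_cons (t : List Lt) : paL (.a :: t) = t := rfl
lemma paL_nil : paL [] = [.a] := rfl
lemma paL_b_cons (y : ZMod 3) (t : List Lt) : paL (.b y :: t) = .a :: .b y :: t := rfl
lemma pbL_b_cons (x y : ZMod 3) (t : List Lt) :
    pbL x (.b y :: t) = if x + y = 0 then t else .b (x + y) :: t := rfl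
lemma pbL_nil (x : ZMod 3) : pbL x [] = [.b x] := rfl
lemma pbL_a_cons (x : ZMod 3) (t : List Lt) : pbL x (.a :: t) = .b x :: .a :: t := rfl

lemma NFP_nil : NFP [] := ⟨by simp [List.Chain'], by simp⟩

lemma NFP_tail {c t} (h : NFP (c :: t)) : NFP t :=
  ⟨h.1.tail, fun d hd => h.2 d (List.mem_cons_of_mem _ hd)⟩

lemma NFP_cons_of {c : Lt} {t : List Lt} (h : NFP t)
    (hne : ∀ d ∈ t.head?, c.isA ≠ d.isA) (hc : c ≠ Lt.b 0) : NFP (c :: t) := by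
  refine ⟨List.isChain_cons.2 ⟨hne, h.1⟩, ?_⟩
  intro d hd
  rcases List.mem_cons.1 hd with rfl | hd
  · exact hc
  · exact h.2 d hd

lemma head_not_a_of_chain {t : List Lt} (h : NFP (.a :: t)) :
    ∀ d ∈ t.head?, d.isA = false := by
  intro d hd
  have := (List.isChain_cons.1 h.1).1 d hd
  cases d <;> simp_all [Lt.isA]

lemma head_not_b_of_chain {y : ZMod 3} {t : List Lt} (h : NFP (.b y :: t)) :
    ∀ d ∈ t.head?, d.isA = true := by
  intro d hd
  have := (List.isChain_cons.1 h.1).1 d hd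
  cases d <;> simp_all [Lt.isA]

lemma NFP_paL {l : List Lt} (h : NFP l) : NFP (paL l) := by
  match l with
  | .a :: t => exact NFP_tail h
  | [] => exact NFP_cons_of NFP_nil (by simp) (by simp)
  | .b y :: t =>
    exact NFP_cons_of h (by simp [Lt.isA]) (by simp)

lemma NFP_pbL {x : ZMod 3} {l : List Lt} (hx : x ≠ 0) (h : NFP l) : NFP (pbL x l) := by
  match l with
  | .b y :: t =>
    rw [pbL_b_cons]
    split
    · exact NFP_tail h
    · refine NFP_cons_of (NFP_tail h) ?_ (by simp_all)
      intro d hd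
      have := head_not_b_of_chain h d hd
      cases d <;> simp_all [Lt.isA]
  | [] => exact NFP_cons_of NFP_nil (by simp) (by simp [hx])
  | .a :: t =>
    exact NFP_cons_of h (by simp [Lt.isA]) (by simp [hx])

def pa (l : NF) : NF := ⟨paL l.1, NFP_paL l.2⟩

/-- prepend `β x`; identity if `x = 0` -/
def pb (x : ZMod 3) (l : NF) : NF :=
  if hx : x = 0 then l else ⟨pbL x l.1, NFP_pbL hx l.2⟩

lemma pa_pa (l : NF) : pa (pa l) = l := by
  apply Subtype.ext
  show paL (paL l.1) = l.1
  match h : l.1 with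
  | [] => rfl
  | .a :: t =>
    have ht : NFP (.a :: t) := h ▸ l.2
    match t, head_not_a_of_chain ht with
    | [], _ => rfl
    | .b y :: t', _ => rfl
    | .a :: t', hh => simp [Lt.isA] at hh
  | .b y :: t => rfl

lemma paL_of_head_not_a {t : List Lt} (ht : ∀ d ∈ t.head?, d.isA = false) :
    paL t = .a :: t := by
  match t with
  | [] => rfl
  | .b y :: t' => rfl
  | .a :: t' => have := ht .a rfl; simp [Lt.isA] at this

lemma pbL_of_head_not_b {x : ZMod 3} {t : List Lt} (ht : ∀ d ∈ t.head?, d.isA = true) :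
    pbL x t = .b x :: t := by
  match t with
  | [] => rfl
  | .a :: t' => rfl
  | .b y :: t' => have := ht (.b y) rfl; simp [Lt.isA] at this

lemma pb_zero (l : NF) : pb 0 l = l := by simp [pb]

lemma pb_list {x : ZMod 3} (hx : x ≠ 0) (l : NF) : (pb x l).1 = pbL x l.1 := by
  simp [pb, dif_neg hx]

lemma pb_pb (x y : ZMod 3) (l : NF) : pb x (pb y l) = pb (x + y) l := by
  rcases eq_or_ne x 0 with rfl | hx
  · simp [pb]
  rcases eq_or_ne y 0 with rfl | hy
  · simp [pb_zero, hx]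
  apply Subtype.ext
  rw [pb_list hx]
  rw [pb_list hy]
  match h : l.1 with
  | [] =>
    rw [pbL_nil, pbL_b_cons]
    rcases eq_or_ne (x + y) 0 with hxy | hxy
    · rw [if_pos hxy, pb, dif_pos hxy, h]
    · rw [if_neg hxy, pb_list hxy, h, pbL_nil]
  | .a :: t =>
    rw [pbL_a_cons, pbL_b_cons]
    rcases eq_or_ne (x + y) 0 with hxy | hxy
    · rw [if_pos hxy, pb, dif_pos hxy, h]
    · rw [if_neg hxy, pb_list hxy, h, pbL_a_cons]
  | .b z :: t =>
    have ht : NFP (.b z :: t) := h ▸ l.2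
    have htb := head_not_b_of_chain ht
    rw [pbL_b_cons]
    rcases eq_or_ne (y + z) 0 with hyz | hyz
    · rw [if_pos hyz, pbL_of_head_not_b htb]
      rcases eq_or_ne (x + y) 0 with hxy | hxy
      · rw [pb, dif_pos hxy, h]
        have : x = z := by linear_combination hxy - hyz
        rw [this]
      · rw [pb_list hxy, h, pbL_b_cons]
        have h2 : x + y + z = x := by linear_combination hyz
        rw [if_neg (by rw [h2]; exact hx), h2]
    · rw [if_neg hyz, pbL_b_cons]
      rcases eq_or_ne (x + y) 0 with hxy | hxy
      · have h2 : x + (y + z) = z := by linear_combination hxy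
        rw [h2, if_neg (ht.2 (.b z) (by simp) ∘ (by intro hz; rw [hz]))]
        rw [pb, dif_pos hxy, h]
      · rw [pb_list hxy, h, pbL_b_cons, add_assoc]


/-! ### The action of `G` on normal form words -/

def paPerm : Equiv.Perm NF := ⟨pa, pa, pa_pa, pa_pa⟩

def pbPerm (x : ZMod 3) : Equiv.Perm NF :=
  ⟨pb x, pb (-x), fun l => by rw [pb_pb]; simp [pb_zero], fun l => by rw [pb_pb]; simp [pb_zero]⟩

lemma zmod2_cases (x : ZMod 2) : x = 0 ∨ x = 1 := by
  have : ∀ y : ZMod 2, y = 0 ∨ y = 1 := by decide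
  exact this x

def pAz (x : ZMod 2) : Equiv.Perm NF := if x = 0 then 1 else paPerm

lemma one_ne_zero_zmod2 : (1 : ZMod 2) ≠ 0 := by
  have : ∀ y : ZMod 2, y = 1 → ¬ y = 0 := by decide
  exact this 1 rfl

lemma pAz_add (x y : ZMod 2) : pAz (x + y) = pAz x * pAz y := by
  rcases zmod2_cases x with rfl | rfl
  · rw [zero_add]
    simp [pAz]
  · rcases zmod2_cases y with rfl | rfl
    · rw [add_zero]
      simp [pAz]
    · have h11 : (1 + 1 : ZMod 2) = 0 := by
        have : ∀ y : ZMod 2, y + y = 0 := by decide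
        exact this 1
      rw [h11]
      simp only [pAz, if_pos rfl, if_neg one_ne_zero_zmod2]
      apply Equiv.ext
      intro l
      exact (pa_pa l).symm

def φA : Multiplicative (ZMod 2) →* Equiv.Perm NF :=
  MonoidHom.mk' (fun m => pAz m.toAdd) (fun m n => pAz_add m.toAdd n.toAdd)

def φB : Multiplicative (ZMod 3) →* Equiv.Perm NF :=
  MonoidHom.mk' (fun m => pbPerm m.toAdd) (by
    intro m n
    apply Equiv.ext
    intro l
    show pb (m * n).toAdd _ = pb m.toAdd (pb n.toAdd l)
    rw [pb_pb]
    rfl)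

def Φ : G →* Equiv.Perm NF := Coprod.lift φA φB

def nf (g : G) : NF := Φ g emptyNF

lemma Φ_α : Φ α = paPerm := by
  rw [α, Φ, Coprod.lift_apply_inl]
  show pAz (Multiplicative.ofAdd (1 : ZMod 2)).toAdd = paPerm
  rw [show (Multiplicative.ofAdd (1 : ZMod 2)).toAdd = 1 from rfl, pAz,
    if_neg one_ne_zero_zmod2]

lemma Φ_β (x : ZMod 3) : Φ (β x) = pbPerm x := by
  rw [β, Φ, Coprod.lift_apply_inr]
  rfl

lemma evalW_pa (l : NF) : evalW (pa l) = α * evalW l := by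
  show evalL (paL l.1) = α * evalL l.1
  match h : l.1 with
  | [] => simp [paL_nil, elt]
  | .a :: t => rw [paL_a_cons, evalL_cons]; show evalL t = α * (α * evalL t);
               rw [← mul_assoc, α_mul_α, one_mul]
  | .b y :: t => rw [paL_b_cons, evalL_cons]; rfl

lemma evalW_pb (x : ZMod 3) (l : NF) : evalW (pb x l) = β x * evalW l := by
  rcases eq_or_ne x 0 with rfl | hx
  · rw [pb_zero, β_zero, one_mul]
  show evalL (pb x l).1 = β x * evalL l.1
  rw [pb_list hx]
  match h : l.1 with
  | [] => simp [pbL_nil, elt]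
  | .a :: t => rw [pbL_a_cons, evalL_cons]; rfl
  | .b y :: t =>
    rw [pbL_b_cons, evalL_cons]
    show _ = β x * (β y * evalL t)
    rw [← mul_assoc, β_mul_β]
    split
    · rename_i hxy; rw [hxy, β_zero, one_mul]
    · rw [evalL_cons]; rfl

lemma evalW_Φ (g : G) (l : NF) : evalW (Φ g l) = g * evalW l := by
  induction g using Coprod.induction_on generalizing l with
  | inl m =>
    rw [Φ, Coprod.lift_apply_inl]
    show evalW (pAz m.toAdd l) = _
    rcases zmod2_cases m.toAdd with hm | hm
    · rw [hm]
      have hm1 : m = 1 := by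
        have := congrArg Multiplicative.ofAdd hm; simpa using this
      rw [hm1, pAz, if_pos rfl]
      show evalW l = Coprod.inl 1 * evalW l
      rw [map_one, one_mul]
    · rw [hm, pAz, if_neg one_ne_zero_zmod2]
      have hm1 : m = Multiplicative.ofAdd (1 : ZMod 2) := by
        have := congrArg Multiplicative.ofAdd hm; simpa using this
      rw [hm1]
      exact evalW_pa l
  | inr m =>
    rw [Φ, Coprod.lift_apply_inr]
    show evalW (pb m.toAdd l) = _
    rw [evalW_pb]
    rfl
  | mul g₁ g₂ h₁ h₂ =>
    rw [map_mul]
    show evalW (Φ g₁ (Φ g₂ l)) = _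
    rw [h₁, h₂, mul_assoc]

lemma evalW_nf (g : G) : evalW (nf g) = g := by
  rw [nf, evalW_Φ]
  show g * evalL [] = g
  rw [evalL_nil, mul_one]

lemma nf_evalW (l : NF) : nf (evalW l) = l := by
  obtain ⟨lst, hl⟩ := l
  induction lst with
  | nil =>
    apply Subtype.ext
    show (Φ (evalL []) emptyNF).1 = _
    rw [evalL_nil, map_one]
    rfl
  | cons c t ih =>
    have htP : NFP t := NFP_tail hl
    apply Subtype.ext
    show (Φ (evalL (c :: t)) emptyNF).1 = c :: t
    rw [evalL_cons, map_mul]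
    have hrec : (Φ (evalL t) emptyNF) = ⟨t, htP⟩ := ih htP
    show (Φ (elt c) (Φ (evalL t) emptyNF)).1 = c :: t
    rw [hrec]
    cases c with
    | a =>
      rw [show elt .a = α from rfl, Φ_α]
      show paL t = .a :: t
      exact paL_of_head_not_a (head_not_a_of_chain hl)
    | b x =>
      rw [show elt (.b x) = β x from rfl, Φ_β]
      have hx : x ≠ 0 := by
        intro h0
        exact hl.2 (.b x) (by simp) (by rw [h0])
      show (pb x ⟨t, htP⟩).1 = .b x :: t
      rw [pb_list hx]
      exact pbL_of_head_not_b (head_not_b_of_chain hl)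

lemma evalW_injective : Function.Injective evalW := by
  intro l₁ l₂ h
  rw [← nf_evalW l₁, ← nf_evalW l₂, h]

/-! ### Coset representatives -/

def headIsA : List Lt → Bool
  | .a :: _ => true
  | _ => false

def headIsB : List Lt → Bool
  | .b _ :: _ => true
  | _ => false

def repAL : List Lt → List Lt
  | .a :: t => t
  | l => l

def repBL : List Lt → List Lt
  | .b _ :: t => t
  | l => l

lemma NFP_repAL {l : List Lt} (h : NFP l) : NFP (repAL l) := by
  match l with
  | .a :: t => exact NFP_tail h
  | [] => exact h
  | .b y :: t => exact h

lemma NFP_repBL {l : List Lt} (h : NFP l) : NFP (repBL l) := by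
  match l with
  | .b y :: t => exact NFP_tail h
  | [] => exact h
  | .a :: t => exact h

def repA (l : NF) : NF := ⟨repAL l.1, NFP_repAL l.2⟩
def repB (l : NF) : NF := ⟨repBL l.1, NFP_repBL l.2⟩

lemma headIsA_repA (l : NF) : headIsA (repA l).1 = false := by
  show headIsA (repAL l.1) = false
  match h : l.1 with
  | [] => rfl
  | .b y :: t => rfl
  | .a :: t =>
    have ht : NFP (.a :: t) := h ▸ l.2
    show headIsA t = false
    match t, head_not_a_of_chain ht with
    | [], _ => rfl
    | .b y :: t', _ => rfl
    | .a :: t', hh => simp [Lt.isA] at hh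

lemma headIsB_repB (l : NF) : headIsB (repB l).1 = false := by
  show headIsB (repBL l.1) = false
  match h : l.1 with
  | [] => rfl
  | .a :: t => rfl
  | .b y :: t =>
    have ht : NFP (.b y :: t) := h ▸ l.2
    show headIsB t = false
    match t, head_not_b_of_chain ht with
    | [], _ => rfl
    | .a :: t', _ => rfl
    | .b y' :: t', hh => simp [Lt.isA] at hh

lemma repA_eq_self {l : NF} (h : headIsA l.1 = false) : repA l = l := by
  apply Subtype.ext
  show repAL l.1 = l.1
  match hl : l.1, h with
  | [], _ => rfl
  | .b y :: t, _ => rfl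

lemma repB_eq_self {l : NF} (h : headIsB l.1 = false) : repB l = l := by
  apply Subtype.ext
  show repBL l.1 = l.1
  match hl : l.1, h with
  | [], _ => rfl
  | .a :: t, _ => rfl

lemma evalW_repA (l : NF) : evalW (repA l) = evalW l ∨ evalW (repA l) = α * evalW l := by
  show evalL (repAL l.1) = evalL l.1 ∨ evalL (repAL l.1) = α * evalL l.1
  match h : l.1 with
  | [] => left; rfl
  | .b y :: t => left; rfl
  | .a :: t =>
    right
    show evalL t = α * evalL (.a :: t)
    rw [evalL_cons]
    show evalL t = α * (α * evalL t)
    rw [← mul_assoc, α_mul_α, one_mul]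

lemma evalW_repB (l : NF) : ∃ x : ZMod 3, evalW (repB l) = β x * evalW l := by
  show ∃ x, evalL (repBL l.1) = β x * evalL l.1
  match h : l.1 with
  | [] => exact ⟨0, by rw [β_zero, one_mul]; rfl⟩
  | .a :: t => exact ⟨0, by rw [β_zero, one_mul]; rfl⟩
  | .b y :: t =>
    refine ⟨-y, ?_⟩
    show evalL t = β (-y) * evalL (.b y :: t)
    rw [evalL_cons]
    show evalL t = β (-y) * (β y * evalL t)
    rw [← mul_assoc, β_mul_β, neg_add_cancel, β_zero, one_mul]

lemma repA_pa (l : NF) : repA (pa l) = repA l := by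
  obtain ⟨lst, hP⟩ := l
  apply Subtype.ext
  show repAL (paL lst) = repAL lst
  match lst, hP with
  | .a :: t, hP =>
    rw [paL_a_cons]
    show repAL t = t
    have := head_not_a_of_chain hP
    match t, this with
    | [], _ => rfl
    | .b y :: t', _ => rfl
    | .a :: t', hh => simp [Lt.isA] at hh
  | [], _ => rfl
  | .b y :: t, _ =>
    rw [paL_b_cons]
    rfl

lemma repB_pb (x : ZMod 3) (l : NF) : repB (pb x l) = repB l := by
  rcases eq_or_ne x 0 with rfl | hx
  · rw [pb_zero]
  obtain ⟨lst, hP⟩ := l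
  apply Subtype.ext
  rw [show (repB (pb x ⟨lst, hP⟩)).1 = repBL (pb x ⟨lst, hP⟩).1 from rfl, pb_list hx]
  show repBL (pbL x lst) = repBL lst
  match lst, hP with
  | [], _ => rw [pbL_nil]; rfl
  | .a :: t, _ => rw [pbL_a_cons]; rfl
  | .b y :: t, hP =>
    rw [pbL_b_cons]
    split
    · show repBL t = repBL (.b y :: t)
      have := head_not_b_of_chain hP
      match t, this with
      | [], _ => rfl
      | .a :: t', _ => rfl
      | .b y' :: t', hh => simp [Lt.isA] at hh
    · rfl

lemma repA_nf_α (y : G) : repA (nf (α * y)) = repA (nf y) := by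
  rw [show nf (α * y) = Φ α (Φ y emptyNF) from by rw [nf, map_mul]; rfl, Φ_α]
  exact repA_pa (nf y)

lemma repB_nf_β (x : ZMod 3) (y : G) : repB (nf (β x * y)) = repB (nf y) := by
  rw [show nf (β x * y) = Φ (β x) (Φ y emptyNF) from by rw [nf, map_mul]; rfl, Φ_β]
  exact repB_pb x (nf y)

/-! ### Vertices of the tree -/

abbrev VA : Type := {l : NF // headIsA l.1 = false}
abbrev VB : Type := {l : NF // headIsB l.1 = false}
abbrev V : Type := VA ⊕ VB

def endAv (l : NF) : VA := ⟨repA l, headIsA_repA l⟩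
def endBv (l : NF) : VB := ⟨repB l, headIsB_repB l⟩

section Subgroup

variable {H : Subgroup G}

def actE (h : H) (l : NF) : NF := nf (evalW l * (h : G)⁻¹)

def actA (h : H) (p : VA) : VA := ⟨repA (nf (evalW p.1 * (h : G)⁻¹)), headIsA_repA _⟩
def actB (h : H) (q : VB) : VB := ⟨repB (nf (evalW q.1 * (h : G)⁻¹)), headIsB_repB _⟩

def actV (h : H) : V → V := Sum.map (actA h) (actB h)

lemma repA_nf_mul (m : NF) (g : G) :
    repA (nf (evalW (repA m) * g)) = repA (nf (evalW m * g)) := by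
  rcases evalW_repA m with h | h
  · rw [h]
  · rw [h, mul_assoc]
    exact repA_nf_α _

lemma repB_nf_mul (m : NF) (g : G) :
    repB (nf (evalW (repB m) * g)) = repB (nf (evalW m * g)) := by
  obtain ⟨x, h⟩ := evalW_repB m
  rw [h, mul_assoc]
  exact repB_nf_β _ _

lemma actE_one (l : NF) : actE (1 : H) l = l := by
  rw [actE]
  show nf (evalW l * (1 : G)⁻¹) = l
  rw [inv_one, mul_one, nf_evalW]

lemma actE_mul (h₁ h₂ : H) (l : NF) : actE h₁ (actE h₂ l) = actE (h₁ * h₂) l := by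
  rw [actE, actE, actE, evalW_nf]
  show nf (evalW l * (↑h₂)⁻¹ * (↑h₁)⁻¹) = nf (evalW l * (((h₁ : G) * h₂)⁻¹))
  rw [mul_inv_rev, mul_assoc]

lemma actA_one (p : VA) : actA (1 : H) p = p := by
  apply Subtype.ext
  show repA (nf (evalW p.1 * (1 : G)⁻¹)) = p.1
  rw [inv_one, mul_one, nf_evalW, repA_eq_self p.2]

lemma actB_one (q : VB) : actB (1 : H) q = q := by
  apply Subtype.ext
  show repB (nf (evalW q.1 * (1 : G)⁻¹)) = q.1
  rw [inv_one, mul_one, nf_evalW, repB_eq_self q.2]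

lemma actA_mul (h₁ h₂ : H) (p : VA) : actA h₁ (actA h₂ p) = actA (h₁ * h₂) p := by
  apply Subtype.ext
  show repA (nf (evalW (repA (nf (evalW p.1 * (↑h₂)⁻¹))) * (↑h₁)⁻¹)) = _
  rw [repA_nf_mul, evalW_nf]
  show _ = repA (nf (evalW p.1 * (((h₁ : G) * h₂)⁻¹)))
  rw [mul_inv_rev, mul_assoc]

lemma actB_mul (h₁ h₂ : H) (q : VB) : actB h₁ (actB h₂ q) = actB (h₁ * h₂) q := by
  apply Subtype.ext
  show repB (nf (evalW (repB (nf (evalW q.1 * (↑h₂)⁻¹))) * (↑h₁)⁻¹)) = _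
  rw [repB_nf_mul, evalW_nf]
  show _ = repB (nf (evalW q.1 * (((h₁ : G) * h₂)⁻¹)))
  rw [mul_inv_rev, mul_assoc]

lemma actV_one (u : V) : actV (1 : H) u = u := by
  cases u with
  | inl p => show Sum.inl (actA 1 p) = _; rw [actA_one]
  | inr q => show Sum.inr (actB 1 q) = _; rw [actB_one]

lemma actV_mul (h₁ h₂ : H) (u : V) : actV h₁ (actV h₂ u) = actV (h₁ * h₂) u := by
  cases u with
  | inl p =>
    show Sum.inl (actA h₁ (actA h₂ p)) = Sum.inl (actA (h₁ * h₂) p)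
    rw [actA_mul]
  | inr q =>
    show Sum.inr (actB h₁ (actB h₂ q)) = Sum.inr (actB (h₁ * h₂) q)
    rw [actB_mul]

lemma endAv_act (h : H) (l : NF) : endAv (actE h l) = actA h (endAv l) := by
  apply Subtype.ext
  show repA (nf (evalW l * (↑h)⁻¹)) = repA (nf (evalW (repA l) * (↑h)⁻¹))
  rw [repA_nf_mul]

lemma endBv_act (h : H) (l : NF) : endBv (actE h l) = actB h (endBv l) := by
  apply Subtype.ext
  show repB (nf (evalW l * (↑h)⁻¹)) = repB (nf (evalW (repB l) * (↑h)⁻¹))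
  rw [repB_nf_mul]

lemma conj_pow_eq (a b : G) (n : ℕ) : (a⁻¹ * b * a) ^ n = a⁻¹ * b ^ n * a := by
  induction n with
  | zero => simp
  | succ n ih =>
    rw [pow_succ, pow_succ, ih]
    simp [mul_assoc]

lemma coe_eq_one_iff (h : H) : (h : G) = 1 ↔ h = 1 :=
  ⟨fun hh => Subtype.ext hh, fun hh => by rw [hh]; rfl⟩

variable (hH : ∀ h : H, h ≠ 1 → ¬ IsOfFinOrder h)

include hH


lemma actA_free (h : H) (p : VA) (hfix : actA h p = p) : h = 1 := by
  by_contra hne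
  apply hH h hne
  have hval : evalW (repA (nf (evalW p.1 * (↑h)⁻¹))) = evalW p.1 :=
    congrArg evalW (congrArg Subtype.val hfix)
  rcases evalW_repA (nf (evalW p.1 * (↑h)⁻¹)) with he | he <;> rw [he, evalW_nf] at hval
  · exact absurd ((coe_eq_one_iff h).1 (by
      have h1 : (↑h)⁻¹ = (1 : G) := mul_left_cancel (hval.trans (mul_one _).symm)
      rw [← inv_inv (h : G), h1, inv_one])) hne
  · have h1 : evalW p.1 * (↑h)⁻¹ = α * evalW p.1 := by
      apply mul_left_cancel (a := α)
      rw [hval, ← mul_assoc, α_mul_α, one_mul]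
    have hinv : (↑h : G)⁻¹ = (evalW p.1)⁻¹ * α * evalW p.1 := by
      rw [mul_assoc, ← h1, inv_mul_cancel_left]
    have h2 : ((h : G)⁻¹) ^ 2 = 1 := by
      rw [hinv, conj_pow_eq, pow_two, α_mul_α, mul_one, inv_mul_cancel]
    refine isOfFinOrder_iff_pow_eq_one.2 ⟨2, by norm_num, ?_⟩
    have hg : ((h : G)) ^ 2 = 1 := by
      rw [← inv_inv (h : G), inv_pow, h2, inv_one]
    exact_mod_cast hg

lemma actB_free (h : H) (q : VB) (hfix : actB h q = q) : h = 1 := by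
  by_contra hne
  apply hH h hne
  have hval : evalW (repB (nf (evalW q.1 * (↑h)⁻¹))) = evalW q.1 :=
    congrArg evalW (congrArg Subtype.val hfix)
  obtain ⟨x, he⟩ := evalW_repB (nf (evalW q.1 * (↑h)⁻¹))
  rw [he, evalW_nf] at hval
  have hβ : β (-x) * β x = 1 := by rw [β_mul_β, neg_add_cancel, β_zero]
  have h1 : evalW q.1 * (↑h)⁻¹ = β (-x) * evalW q.1 := by
    apply mul_left_cancel (a := β x)
    rw [hval, ← mul_assoc, β_mul_β]
    have : x + -x = 0 := by ring
    rw [this, β_zero, one_mul]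
  have hinv : (↑h : G)⁻¹ = (evalW q.1)⁻¹ * β (-x) * evalW q.1 := by
    rw [mul_assoc, ← h1, inv_mul_cancel_left]
  have hb3 : β (-x) ^ 3 = 1 := by
    rw [pow_succ, pow_two, β_mul_β, β_mul_β]
    have : -x + -x + -x = 0 := by
      have h3 : ∀ y : ZMod 3, y + y + y = 0 := by decide
      exact h3 (-x)
    rw [this, β_zero]
  have h3 : ((h : G)⁻¹) ^ 3 = 1 := by
    rw [hinv, conj_pow_eq, hb3, mul_one, inv_mul_cancel]
  refine isOfFinOrder_iff_pow_eq_one.2 ⟨3, by norm_num, ?_⟩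
  have hg : ((h : G)) ^ 3 = 1 := by
    rw [← inv_inv (h : G), inv_pow, h3, inv_one]
  exact_mod_cast hg

lemma actV_free (h : H) (u : V) (hfix : actV h u = u) : h = 1 := by
  cases u with
  | inl p => exact actA_free hH h p (Sum.inl_injective hfix)
  | inr q => exact actB_free hH h q (Sum.inr_injective hfix)

end Subgroup

/-! ### The quotient groupoid -/

abbrev TFSub : Type := {H : Subgroup G // ∀ h : H, h ≠ 1 → ¬ IsOfFinOrder h}

variable (Ht : TFSub)

def setoidV : Setoid V where
  r u v := ∃ h : Ht.1, actV h u = v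
  iseqv := by
    refine ⟨fun u => ⟨1, actV_one u⟩, ?_, ?_⟩
    · rintro u v ⟨h, hh⟩
      exact ⟨h⁻¹, by rw [← hh, actV_mul, inv_mul_cancel, actV_one]⟩
    · rintro u v w ⟨h₁, hh₁⟩ ⟨h₂, hh₂⟩
      exact ⟨h₂ * h₁, by rw [← actV_mul, hh₁, hh₂]⟩

def Ob : Type := Quotient (setoidV Ht)

def mkOb (u : V) : Ob Ht := Quotient.mk (setoidV Ht) u

lemma mkOb_actV (h : Ht.1) (u : V) : mkOb Ht (actV h u) = mkOb Ht u :=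
  Quotient.sound ⟨h⁻¹, by rw [actV_mul, inv_mul_cancel, actV_one]⟩

lemma exists_actV_of_eq {u v : V} (h : mkOb Ht u = mkOb Ht v) :
    ∃ k : Ht.1, actV k u = v :=
  Quotient.exact h

lemma mkOb_out (x : Ob Ht) : mkOb Ht (Quotient.out x) = x := Quotient.out_eq x

open scoped Classical in
def trv (u v : V) : Ht.1 :=
  if h : ∃ k : Ht.1, actV k u = v then h.choose else 1

lemma trv_spec {u v : V} (hex : ∃ k : Ht.1, actV k u = v) :
    actV (trv Ht u v) u = v := by
  classical
  rw [trv, dif_pos hex]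
  exact hex.choose_spec

lemma trv_uniq {u v : V} (k : Ht.1) (hk : actV k u = v) : trv Ht u v = k := by
  have h1 : actV (trv Ht u v) u = v := trv_spec Ht ⟨k, hk⟩
  have h2 : actV (k⁻¹ * trv Ht u v) u = u := by
    rw [← actV_mul, h1, ← hk, actV_mul, inv_mul_cancel, actV_one]
  have h3 := actV_free Ht.2 _ u h2
  have := congrArg (fun z => k * z) h3
  simpa [mul_assoc] using this

lemma trv_refl (u : V) : trv Ht u u = 1 := trv_uniq Ht 1 (actV_one u)

lemma trv_act {u w : V} (k : Ht.1) (hex : ∃ j : Ht.1, actV j u = w) :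
    trv Ht u (actV k w) = k * trv Ht u w := by
  apply trv_uniq
  rw [← actV_mul, trv_spec Ht hex]

instance grpdOb : CategoryTheory.Groupoid (Ob Ht) where
  Hom _ y := {v : V // mkOb Ht v = y}
  id x := ⟨Quotient.out x, mkOb_out Ht x⟩
  comp {x y z} f g := ⟨actV (trv Ht (Quotient.out y) f.1) g.1, by rw [mkOb_actV]; exact g.2⟩
  id_comp {x y} f := by
    apply Subtype.ext
    show actV (trv Ht (Quotient.out x) (Quotient.out x)) f.1 = f.1
    rw [trv_refl, actV_one]
  comp_id {x y} f := by
    apply Subtype.ext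
    show actV (trv Ht (Quotient.out y) f.1) (Quotient.out y) = f.1
    exact trv_spec Ht (exists_actV_of_eq Ht ((mkOb_out Ht y).trans f.2.symm))
  assoc {w x y z} f g h := by
    apply Subtype.ext
    show actV (trv Ht (Quotient.out y) (actV (trv Ht (Quotient.out x) f.1) g.1)) h.1
      = actV (trv Ht (Quotient.out x) f.1) (actV (trv Ht (Quotient.out y) g.1) h.1)
    rw [trv_act Ht _ (exists_actV_of_eq Ht ((mkOb_out Ht y).trans g.2.symm)), ← actV_mul]
  inv {x y} f := ⟨actV (trv Ht (Quotient.out y) f.1)⁻¹ (Quotient.out x),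
    by rw [mkOb_actV, mkOb_out]⟩
  inv_comp {x y} f := by
    have hex := exists_actV_of_eq Ht ((mkOb_out Ht y).trans f.2.symm)
    have hk : actV (trv Ht (Quotient.out y) f.1) (Quotient.out y) = f.1 := trv_spec Ht hex
    apply Subtype.ext
    show actV (trv Ht (Quotient.out x) (actV (trv Ht (Quotient.out y) f.1)⁻¹ (Quotient.out x)))
      f.1 = Quotient.out y
    rw [trv_uniq Ht _ rfl]
    calc actV (trv Ht (Quotient.out y) f.1)⁻¹ f.1
        = actV (trv Ht (Quotient.out y) f.1)⁻¹
            (actV (trv Ht (Quotient.out y) f.1) (Quotient.out y)) := by rw [hk]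
      _ = Quotient.out y := by rw [actV_mul, inv_mul_cancel, actV_one]
  comp_inv {x y} f := by
    apply Subtype.ext
    show actV (trv Ht (Quotient.out y) f.1)
      (actV (trv Ht (Quotient.out y) f.1)⁻¹ (Quotient.out x)) = Quotient.out x
    rw [actV_mul, mul_inv_cancel, actV_one]

/-! ### Edges -/

def setoidE : Setoid NF where
  r l l' := ∃ h : Ht.1, actE h l = l'
  iseqv := by
    refine ⟨fun l => ⟨1, actE_one l⟩, ?_, ?_⟩
    · rintro l l' ⟨h, hh⟩
      exact ⟨h⁻¹, by rw [← hh, actE_mul, inv_mul_cancel, actE_one]⟩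
    · rintro l l' l'' ⟨h₁, hh₁⟩ ⟨h₂, hh₂⟩
      exact ⟨h₂ * h₁, by rw [← actE_mul, hh₁, hh₂]⟩

def QE : Type := Quotient (setoidE Ht)

def mkE (l : NF) : QE Ht := Quotient.mk (setoidE Ht) l

lemma mkE_actE (h : Ht.1) (l : NF) : mkE Ht (actE h l) = mkE Ht l :=
  Quotient.sound ⟨h⁻¹, by rw [actE_mul, inv_mul_cancel, actE_one]⟩

def endAQ : QE Ht → Ob Ht :=
  Quotient.lift (fun l => mkOb Ht (Sum.inl (endAv l))) (by
    rintro l l' ⟨h, rfl⟩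
    show mkOb Ht (Sum.inl (endAv l)) = mkOb Ht (Sum.inl (endAv (actE h l)))
    rw [endAv_act]
    exact (mkOb_actV Ht h (Sum.inl (endAv l))).symm)

def endBQ : QE Ht → Ob Ht :=
  Quotient.lift (fun l => mkOb Ht (Sum.inr (endBv l))) (by
    rintro l l' ⟨h, rfl⟩
    show mkOb Ht (Sum.inr (endBv l)) = mkOb Ht (Sum.inr (endBv (actE h l)))
    rw [endBv_act]
    exact (mkOb_actV Ht h (Sum.inr (endBv l))).symm)

lemma endAQ_mkE (l : NF) : endAQ Ht (mkE Ht l) = mkOb Ht (Sum.inl (endAv l)) := rfl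
lemma endBQ_mkE (l : NF) : endBQ Ht (mkE Ht l) = mkOb Ht (Sum.inr (endBv l)) := rfl

/-- generating arrows -/
abbrev Arr (x y : Ob Ht) : Type := {e : QE Ht // endAQ Ht e = x ∧ endBQ Ht e = y}

/-- the morphism associated to a generating arrow -/
def ofArr {x y : Ob Ht} (e : Arr Ht x y) : x ⟶ y :=
  ⟨Sum.inr (endBv (actE (trv Ht (Sum.inl (endAv (Quotient.out e.1))) (Quotient.out x))
      (Quotient.out e.1))), by
    rw [endBv_act]
    show mkOb Ht (actV _ (Sum.inr (endBv (Quotient.out e.1)))) = y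
    rw [mkOb_actV]
    have h1 : mkOb Ht (Sum.inr (endBv (Quotient.out e.1))) = endBQ Ht (mkE Ht (Quotient.out e.1)) :=
      rfl
    rw [h1, show mkE Ht (Quotient.out e.1) = e.1 from Quotient.out_eq e.1, e.2.2]⟩

lemma exists_ofArr_align {x y : Ob Ht} (e : Arr Ht x y) :
    ∃ k : Ht.1, actV k (Sum.inl (endAv (Quotient.out e.1))) = Quotient.out x := by
  apply exists_actV_of_eq
  rw [mkOb_out]
  rw [show mkOb Ht (Sum.inl (endAv (Quotient.out e.1))) = endAQ Ht (mkE Ht (Quotient.out e.1))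
    from rfl]
  rw [show mkE Ht (Quotient.out e.1) = e.1 from Quotient.out_eq e.1, e.2.1]

def vbase : V := Sum.inl ⟨emptyNF, rfl⟩

instance : Nonempty (Ob Ht) := ⟨mkOb Ht vbase⟩

lemma hom_nonempty (x y : Ob Ht) : Nonempty (x ⟶ y) := ⟨⟨Quotient.out y, mkOb_out Ht y⟩⟩

instance obConnected : CategoryTheory.IsConnected (Ob Ht) := by
  apply CategoryTheory.zigzag_isConnected
  intro x y
  exact Relation.ReflTransGen.single (Or.inl (hom_nonempty Ht x y))

/-! ### The potential function for a labelling -/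

section Potential

variable (X : Type) [Group X] (fl : ∀ x y : Ob Ht, Arr Ht x y → X)

def Fq (e : QE Ht) : X := fl (endAQ Ht e) (endBQ Ht e) ⟨e, rfl, rfl⟩

def Fhat (l : NF) : X := Fq Ht X fl (mkE Ht l)

lemma Fhat_actE (h : Ht.1) (l : NF) : Fhat Ht X fl (actE h l) = Fhat Ht X fl l := by
  rw [Fhat, Fhat, mkE_actE]

open scoped Classical in
def Fr (l : List Lt) : X := if h : NFP l then Fhat Ht X fl ⟨l, h⟩ else 1

lemma Fr_eq (l : NF) : Fr Ht X fl l.1 = Fhat Ht X fl l := by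
  classical
  rw [Fr, dif_pos l.2]

def Wr : Bool → List Lt → X
  | true, [] => 1
  | false, [] => Fr Ht X fl []
  | true, c :: t => Wr false t * (Fr Ht X fl (c :: t))⁻¹
  | false, c :: t => Wr true t * Fr Ht X fl (c :: t)

def WV : V → X
  | Sum.inl p => Wr Ht X fl true p.1.1
  | Sum.inr q => Wr Ht X fl false q.1.1

def wv (u v : V) : X := (WV Ht X fl u)⁻¹ * WV Ht X fl v

lemma wv_refl (u : V) : wv Ht X fl u u = 1 := inv_mul_cancel _

lemma wv_comp (u v z : V) : wv Ht X fl u v * wv Ht X fl v z = wv Ht X fl u z := by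
  rw [wv, wv, wv, mul_assoc, mul_inv_cancel_left]

lemma repA_val_eq {l : NF} (h : headIsA l.1 = false) : (repA l).1 = l.1 :=
  congrArg Subtype.val (repA_eq_self h)

lemma repB_val_eq {l : NF} (h : headIsB l.1 = false) : (repB l).1 = l.1 :=
  congrArg Subtype.val (repB_eq_self h)

/-- The edge condition (W4). -/
lemma wv_edge (l : NF) :
    wv Ht X fl (Sum.inl (endAv l)) (Sum.inr (endBv l)) = Fhat Ht X fl l := by
  obtain ⟨lst, hP⟩ := l
  rw [wv]
  show (Wr Ht X fl true (repA ⟨lst, hP⟩).1)⁻¹ * Wr Ht X fl false (repB ⟨lst, hP⟩).1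
    = Fhat Ht X fl ⟨lst, hP⟩
  match lst, hP with
  | [], hP =>
    show (1 : X)⁻¹ * Fr Ht X fl [] = _
    rw [inv_one, one_mul]
    exact Fr_eq Ht X fl ⟨[], hP⟩
  | .a :: t, hP =>
    show (Wr Ht X fl true t)⁻¹ * (Wr Ht X fl true t * Fr Ht X fl (.a :: t)) = _
    rw [inv_mul_cancel_left]
    exact Fr_eq Ht X fl ⟨.a :: t, hP⟩
  | .b y :: t, hP =>
    show (Wr Ht X fl false t * (Fr Ht X fl (.b y :: t))⁻¹)⁻¹ * Wr Ht X fl false t = _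
    rw [mul_inv_rev, inv_inv, mul_assoc, inv_mul_cancel, mul_one]
    exact Fr_eq Ht X fl ⟨.b y :: t, hP⟩

def rho (h : Ht.1) (u : V) : X := WV Ht X fl (actV h u) * (WV Ht X fl u)⁻¹

lemma rho_step (h : Ht.1) (l : NF) :
    rho Ht X fl h (Sum.inl (endAv l)) = rho Ht X fl h (Sum.inr (endBv l)) := by
  have hc : (WV Ht X fl (Sum.inl (endAv l)))⁻¹ * WV Ht X fl (Sum.inr (endBv l))
      = Fhat Ht X fl l := wv_edge Ht X fl l
  have hc' : (WV Ht X fl (actV h (Sum.inl (endAv l))))⁻¹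
      * WV Ht X fl (actV h (Sum.inr (endBv l))) = Fhat Ht X fl l := by
    have h1 := wv_edge Ht X fl (actE h l)
    rw [wv, endAv_act, endBv_act, Fhat_actE] at h1
    exact h1
  have hB : WV Ht X fl (Sum.inr (endBv l))
      = WV Ht X fl (Sum.inl (endAv l)) * Fhat Ht X fl l := by
    rw [← hc, mul_inv_cancel_left]
  have hB' : WV Ht X fl (actV h (Sum.inr (endBv l)))
      = WV Ht X fl (actV h (Sum.inl (endAv l))) * Fhat Ht X fl l := by
    rw [← hc', mul_inv_cancel_left]
  rw [rho, rho, hB, hB', mul_inv_rev, ← mul_assoc, mul_assoc _ _ (Fhat Ht X fl l)⁻¹]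
  rw [mul_inv_cancel, mul_one]

def lenV : V → ℕ
  | Sum.inl p => p.1.1.length
  | Sum.inr q => q.1.1.length

lemma inl_nil_eq_vbase {hP : NFP []} {hp : headIsA [] = false} :
    (Sum.inl ⟨⟨[], hP⟩, hp⟩ : V) = vbase :=
  congrArg Sum.inl (Subtype.ext (Subtype.ext rfl))

lemma rho_inr_nil (h : Ht.1) {hP : NFP []} {hq : headIsB [] = false} :
    rho Ht X fl h (Sum.inr ⟨⟨[], hP⟩, hq⟩) = rho Ht X fl h vbase := by
  have h1 := rho_step Ht X fl h emptyNF
  have h2 : (Sum.inl (endAv emptyNF) : V) = vbase :=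
    congrArg Sum.inl (Subtype.ext (Subtype.ext rfl))
  have h3 : (Sum.inr (endBv emptyNF) : V) = Sum.inr ⟨⟨[], hP⟩, hq⟩ :=
    congrArg Sum.inr (Subtype.ext (Subtype.ext rfl))
  rw [h2, h3] at h1
  exact h1.symm

lemma rho_const_aux (h : Ht.1) :
    ∀ (n : ℕ) (u : V), lenV u ≤ n → rho Ht X fl h u = rho Ht X fl h vbase := by
  intro n
  induction n with
  | zero =>
    rintro (⟨⟨lst, hP⟩, hp⟩ | ⟨⟨lst, hP⟩, hq⟩) hlen
    · match lst, hP, hp, hlen with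
      | [], hP, hp, _ => rw [inl_nil_eq_vbase]
      | c :: t, hP, hp, hlen => exact absurd hlen (by simp [lenV])
    · match lst, hP, hq, hlen with
      | [], hP, hq, _ => exact rho_inr_nil Ht X fl h
      | c :: t, hP, hq, hlen => exact absurd hlen (by simp [lenV])
  | succ n ih =>
    rintro (⟨⟨lst, hP⟩, hp⟩ | ⟨⟨lst, hP⟩, hq⟩) hlen
    · match lst, hP, hp, hlen with
      | [], hP, hp, _ => rw [inl_nil_eq_vbase]
      | .a :: t, hP, hp, hlen => exact absurd hp (by simp [headIsA])
      | .b y :: t, hP, hp, hlen =>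
        have h2 : (Sum.inl (endAv ⟨.b y :: t, hP⟩) : V) = Sum.inl ⟨⟨.b y :: t, hP⟩, hp⟩ :=
          congrArg Sum.inl (Subtype.ext (Subtype.ext rfl))
        have h1 := rho_step Ht X fl h ⟨.b y :: t, hP⟩
        rw [h2] at h1
        rw [h1]
        have h3 : (Sum.inr (endBv ⟨.b y :: t, hP⟩) : V)
            = Sum.inr ⟨⟨t, NFP_tail hP⟩, by
                have := head_not_b_of_chain hP
                match t, this with
                | [], _ => rfl
                | .a :: t', _ => rfl
                | .b y' :: t', hh => simp [Lt.isA] at hh⟩ :=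
          congrArg Sum.inr (Subtype.ext (Subtype.ext rfl))
        rw [h3]
        apply ih
        show t.length ≤ n
        simpa [lenV] using Nat.succ_le_succ_iff.1 hlen
    · match lst, hP, hq, hlen with
      | [], hP, hq, _ => exact rho_inr_nil Ht X fl h
      | .b y :: t, hP, hq, hlen => exact absurd hq (by simp [headIsB])
      | .a :: t, hP, hq, hlen =>
        have h2 : (Sum.inr (endBv ⟨.a :: t, hP⟩) : V) = Sum.inr ⟨⟨.a :: t, hP⟩, hq⟩ :=
          congrArg Sum.inr (Subtype.ext (Subtype.ext rfl))
        have h1 := rho_step Ht X fl h ⟨.a :: t, hP⟩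
        rw [h2] at h1
        rw [← h1]
        have h3 : (Sum.inl (endAv ⟨.a :: t, hP⟩) : V)
            = Sum.inl ⟨⟨t, NFP_tail hP⟩, by
                have := head_not_a_of_chain hP
                match t, this with
                | [], _ => rfl
                | .b y' :: t', _ => rfl
                | .a :: t', hh => simp [Lt.isA] at hh⟩ :=
          congrArg Sum.inl (Subtype.ext (Subtype.ext rfl))
        rw [h3]
        apply ih
        show t.length ≤ n
        simpa [lenV] using Nat.succ_le_succ_iff.1 hlen

lemma rho_const (h : Ht.1) (u : V) : rho Ht X fl h u = rho Ht X fl h vbase :=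
  rho_const_aux Ht X fl h (lenV u) u le_rfl

lemma WV_act (h : Ht.1) (u : V) :
    WV Ht X fl (actV h u) = rho Ht X fl h vbase * WV Ht X fl u := by
  rw [← rho_const Ht X fl h u, rho, mul_assoc, inv_mul_cancel, mul_one]

lemma wv_act (h : Ht.1) (u v : V) :
    wv Ht X fl (actV h u) (actV h v) = wv Ht X fl u v := by
  rw [wv, wv, WV_act, WV_act, mul_inv_rev, mul_assoc, inv_mul_cancel_left]

end Potential

/-! ### Pair morphisms -/

open CategoryTheory

def mHom (u v : V) : (mkOb Ht u ⟶ mkOb Ht v) :=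
  ⟨actV (trv Ht u (Quotient.out (mkOb Ht u))) v, mkOb_actV Ht _ v⟩

lemma exists_out (u : V) : ∃ k : Ht.1, actV k u = Quotient.out (mkOb Ht u) :=
  exists_actV_of_eq Ht (mkOb_out Ht (mkOb Ht u)).symm

lemma mHom_id (u : V) : mHom Ht u u = 𝟙 (mkOb Ht u) := by
  apply Subtype.ext
  show actV (trv Ht u (Quotient.out (mkOb Ht u))) u = Quotient.out (mkOb Ht u)
  exact trv_spec Ht (exists_out Ht u)

lemma mHom_comp (u v z : V) : mHom Ht u v ≫ mHom Ht v z = mHom Ht u z := by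
  apply Subtype.ext
  have hu := trv_spec Ht (exists_out Ht u)
  have hv := trv_spec Ht (exists_out Ht v)
  set ku := trv Ht u (Quotient.out (mkOb Ht u)) with hku
  set kv := trv Ht v (Quotient.out (mkOb Ht v)) with hkv
  show actV (trv Ht (Quotient.out (mkOb Ht v)) (actV ku v)) (actV kv z) = actV ku z
  have h1 : trv Ht (Quotient.out (mkOb Ht v)) (actV ku v) = ku * kv⁻¹ := by
    apply trv_uniq
    rw [← hv, actV_mul]
    congr 1
    group
  rw [h1, actV_mul]
  congr 1
  group

lemma map_mHom_inv {X : Type} [Group X] (F : Ob Ht ⥤ SingleObj X) (u v : V) :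
    F.map (mHom Ht v u) = (show X from F.map (mHom Ht u v))⁻¹ := by
  have h1 : F.map (mHom Ht u v ≫ mHom Ht v u) = (1 : X) := by
    rw [mHom_comp, mHom_id, CategoryTheory.Functor.map_id]
    rfl
  rw [CategoryTheory.Functor.map_comp, SingleObj.comp_as_mul] at h1
  exact eq_inv_of_mul_eq_one_left h1

/-- the adjacency lemma : the pair morphism of an edge is `ofArr` of its class. -/
lemma mHom_adj (l : NF) :
    mHom Ht (Sum.inl (endAv l)) (Sum.inr (endBv l))
      = ofArr Ht (x := mkOb Ht (Sum.inl (endAv l))) (y := mkOb Ht (Sum.inr (endBv l)))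
        ⟨mkE Ht l, rfl, rfl⟩ := by
  apply Subtype.ext
  obtain ⟨j, hj⟩ : ∃ j : Ht.1, actE j (Quotient.out (mkE Ht l)) = l :=
    Quotient.exact (Quotient.out_eq (mkE Ht l))
  set x := mkOb Ht (Sum.inl (endAv l)) with hx
  set l₀ := Quotient.out (mkE Ht l) with hl₀
  set ku := trv Ht (Sum.inl (endAv l)) (Quotient.out x) with hku
  have hkuspec : actV ku (Sum.inl (endAv l)) = Quotient.out x :=
    trv_spec Ht (exists_out Ht (Sum.inl (endAv l)))
  have hkey : trv Ht (Sum.inl (endAv l₀)) (Quotient.out x) = ku * j := by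
    apply trv_uniq
    rw [← actV_mul]
    have h2 : actV j (Sum.inl (endAv l₀)) = Sum.inl (endAv l) := by
      show Sum.inl (actA j (endAv l₀)) = Sum.inl (endAv l)
      rw [← endAv_act, hj]
    rw [h2, hkuspec]
  show actV ku (Sum.inr (endBv l)) = Sum.inr (endBv (actE (trv Ht (Sum.inl
    (endAv l₀)) (Quotient.out x)) l₀))
  rw [hkey, ← actE_mul, hj]
  show Sum.inr (actB ku (endBv l)) = Sum.inr (endBv (actE ku l))
  rw [endBv_act]

/-! ### The lift functor -/

section Func

variable (X : Type) [Group X] (fl : ∀ x y : Ob Ht, Arr Ht x y → X)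

lemma comp_val {x y z : Ob Ht} (f : x ⟶ y) (g : y ⟶ z) :
    (f ≫ g).1 = actV (trv Ht (Quotient.out y) f.1) g.1 := rfl

def funcF : Ob Ht ⥤ SingleObj X where
  obj _ := SingleObj.star X
  map {x y} f := (show X from wv Ht X fl (Quotient.out x) f.1)⁻¹
  map_id x := by
    show (wv Ht X fl (Quotient.out x) (Quotient.out x))⁻¹ = _
    rw [wv_refl, inv_one]
    rfl
  map_comp {x y z} f g := by
    have hk : actV (trv Ht (Quotient.out y) f.1) (Quotient.out y) = f.1 :=
      trv_spec Ht (exists_actV_of_eq Ht ((mkOb_out Ht y).trans f.2.symm))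
    show (wv Ht X fl (Quotient.out x) (actV (trv Ht (Quotient.out y) f.1) g.1))⁻¹ = _
    rw [SingleObj.comp_as_mul]
    set k := trv Ht (Quotient.out y) f.1 with hkdef
    have h1 : wv Ht X fl (Quotient.out x) (actV k g.1)
        = wv Ht X fl (Quotient.out x) f.1 * wv Ht X fl (Quotient.out y) g.1 := by
      rw [← wv_comp Ht X fl (Quotient.out x) f.1]
      congr 1
      rw [← hk, wv_act]
    rw [h1, mul_inv_rev]

lemma funcF_map_ofArr {x y : Ob Ht} (e : Arr Ht x y) :
    (funcF Ht X fl).map (ofArr Ht e) = (Fq Ht X fl e.1)⁻¹ := by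
  have hk : actV (trv Ht (Sum.inl (endAv (Quotient.out e.1))) (Quotient.out x))
      (Sum.inl (endAv (Quotient.out e.1))) = Quotient.out x :=
    trv_spec Ht (exists_ofArr_align Ht e)
  set k := trv Ht (Sum.inl (endAv (Quotient.out e.1))) (Quotient.out x) with hkdef
  show (wv Ht X fl (Quotient.out x) (Sum.inr (endBv (actE k (Quotient.out e.1)))))⁻¹ = _
  have h2 : (Sum.inr (endBv (actE k (Quotient.out e.1))) : V)
      = actV k (Sum.inr (endBv (Quotient.out e.1))) := by
    show Sum.inr (endBv (actE k (Quotient.out e.1))) = Sum.inr (actB k (endBv (Quotient.out e.1)))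
    rw [endBv_act]
  rw [h2, ← hk, wv_act, wv_edge]
  have h3 : Fhat Ht X fl (Quotient.out e.1) = Fq Ht X fl (mkE Ht (Quotient.out e.1)) := rfl
  have h4 : mkE Ht (Quotient.out e.1) = e.1 := Quotient.out_eq e.1
  rw [h3, h4]

lemma Fq_label {x y : Ob Ht} (e : Arr Ht x y) : Fq Ht X fl e.1 = fl x y e := by
  obtain ⟨e0, h1, h2⟩ := e
  subst h1
  subst h2
  rfl

end Func

/-! ### Uniqueness of lifts -/

section Uniq

open CategoryTheory

variable {X : Type} [Group X] (F₁ F₂ : Ob Ht ⥤ SingleObj X)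
  (hgen : ∀ (x y : Ob Ht) (e : Arr Ht x y), F₁.map (ofArr Ht e) = F₂.map (ofArr Ht e))

def wB0 : V := Sum.inr ⟨emptyNF, rfl⟩

include hgen

lemma maps_adjAB (l : NF) :
    F₁.map (mHom Ht (Sum.inl (endAv l)) (Sum.inr (endBv l)))
      = F₂.map (mHom Ht (Sum.inl (endAv l)) (Sum.inr (endBv l))) := by
  rw [mHom_adj]
  exact hgen _ _ _

lemma maps_adjBA (l : NF) :
    F₁.map (mHom Ht (Sum.inr (endBv l)) (Sum.inl (endAv l)))
      = F₂.map (mHom Ht (Sum.inr (endBv l)) (Sum.inl (endAv l))) := by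
  rw [map_mHom_inv Ht F₁ _ _, map_mHom_inv Ht F₂ _ _, maps_adjAB Ht F₁ F₂ hgen l]

lemma maps_id (u : V) : F₁.map (mHom Ht u u) = F₂.map (mHom Ht u u) := by
  rw [mHom_id, CategoryTheory.Functor.map_id, CategoryTheory.Functor.map_id,
    SingleObj.id_as_one, SingleObj.id_as_one]

lemma maps_to_baseA : ∀ (n : ℕ) (u : V), lenV u ≤ n →
    F₁.map (mHom Ht u vbase) = F₂.map (mHom Ht u vbase) := by
  intro n
  induction n using Nat.strong_induction_on with
  | _ n ih =>
  rintro (⟨⟨lstu, hPu⟩, hpu⟩ | ⟨⟨lstu, hPu⟩, hqu⟩) hlen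
  · match lstu, hPu, hpu, hlen with
    | .a :: t, hPu, hpu, hlen => exact absurd hpu (by simp [headIsA])
    | [], hPu, hpu, hlen =>
      rw [inl_nil_eq_vbase]
      exact maps_id Ht F₁ F₂ hgen vbase
    | .b y :: t, hPu, hpu, hlen =>
      have hu : (Sum.inl ⟨⟨.b y :: t, hPu⟩, hpu⟩ : V) = Sum.inl (endAv ⟨.b y :: t, hPu⟩) :=
        congrArg Sum.inl (Subtype.ext (Subtype.ext rfl))
      set m : V := Sum.inr (endBv ⟨.b y :: t, hPu⟩) with hm
      have hlu : lenV (Sum.inl ⟨⟨.b y :: t, hPu⟩, hpu⟩ : V) = t.length + 1 := by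
        show (Lt.b y :: t).length = t.length + 1
        simp
      rw [hlu] at hlen
      have hlm : lenV m = t.length := rfl
      have hdec : mHom Ht (Sum.inl ⟨⟨.b y :: t, hPu⟩, hpu⟩) vbase
          = mHom Ht (Sum.inl ⟨⟨.b y :: t, hPu⟩, hpu⟩) m ≫ mHom Ht m vbase :=
        (mHom_comp Ht _ m _).symm
      rw [hdec, CategoryTheory.Functor.map_comp, CategoryTheory.Functor.map_comp,
        SingleObj.comp_as_mul, SingleObj.comp_as_mul]
      have e1 : F₁.map (mHom Ht m vbase) = F₂.map (mHom Ht m vbase) := by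
        rcases Nat.lt_or_ge t.length n with hlt | hge
        · exact ih t.length hlt m hlm.le
        · omega
      have e2 := maps_adjAB Ht F₁ F₂ hgen ⟨.b y :: t, hPu⟩
      rw [← hu] at e2
      rw [e1, e2]
  · match lstu, hPu, hqu, hlen with
    | .b y :: t, hPu, hqu, hlen => exact absurd hqu (by simp [headIsB])
    | [], hPu, hqu, hlen =>
      have hu : (Sum.inr ⟨⟨[], hPu⟩, hqu⟩ : V) = Sum.inr (endBv emptyNF) :=
        congrArg Sum.inr (Subtype.ext (Subtype.ext rfl))
      have hv : vbase = Sum.inl (endAv emptyNF) :=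
        congrArg Sum.inl (Subtype.ext (Subtype.ext rfl))
      rw [hu, hv]
      exact maps_adjBA Ht F₁ F₂ hgen emptyNF
    | .a :: t, hPu, hqu, hlen =>
      have hu : (Sum.inr ⟨⟨.a :: t, hPu⟩, hqu⟩ : V) = Sum.inr (endBv ⟨.a :: t, hPu⟩) :=
        congrArg Sum.inr (Subtype.ext (Subtype.ext rfl))
      set m : V := Sum.inl (endAv ⟨.a :: t, hPu⟩) with hm
      have hlu : lenV (Sum.inr ⟨⟨.a :: t, hPu⟩, hqu⟩ : V) = t.length + 1 := by
        show (Lt.a :: t).length = t.length + 1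
        simp
      rw [hlu] at hlen
      have hlm : lenV m = t.length := rfl
      have hdec : mHom Ht (Sum.inr ⟨⟨.a :: t, hPu⟩, hqu⟩) vbase
          = mHom Ht (Sum.inr ⟨⟨.a :: t, hPu⟩, hqu⟩) m ≫ mHom Ht m vbase :=
        (mHom_comp Ht _ m _).symm
      rw [hdec, CategoryTheory.Functor.map_comp, CategoryTheory.Functor.map_comp,
        SingleObj.comp_as_mul, SingleObj.comp_as_mul]
      have e1 : F₁.map (mHom Ht m vbase) = F₂.map (mHom Ht m vbase) := by
        rcases Nat.lt_or_ge t.length n with hlt | hge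
        · exact ih t.length hlt m hlm.le
        · omega
      have e2 := maps_adjBA Ht F₁ F₂ hgen ⟨.a :: t, hPu⟩
      rw [← hu] at e2
      rw [e1, e2]

lemma maps_mHom : ∀ (n : ℕ) (u v : V), lenV v ≤ n →
    F₁.map (mHom Ht u v) = F₂.map (mHom Ht u v) := by
  intro n
  induction n using Nat.strong_induction_on with
  | _ n ih =>
  rintro u (⟨⟨lstv, hPv⟩, hpv⟩ | ⟨⟨lstv, hPv⟩, hqv⟩) hlen
  · match lstv, hPv, hpv, hlen with
    | .a :: t, hPv, hpv, hlen => exact absurd hpv (by simp [headIsA])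
    | [], hPv, hpv, hlen =>
      rw [inl_nil_eq_vbase]
      exact maps_to_baseA Ht F₁ F₂ hgen (lenV u) u le_rfl
    | .b y :: t, hPv, hpv, hlen =>
      have hv : (Sum.inl ⟨⟨.b y :: t, hPv⟩, hpv⟩ : V) = Sum.inl (endAv ⟨.b y :: t, hPv⟩) :=
        congrArg Sum.inl (Subtype.ext (Subtype.ext rfl))
      set m : V := Sum.inr (endBv ⟨.b y :: t, hPv⟩) with hm
      have hlv : lenV (Sum.inl ⟨⟨.b y :: t, hPv⟩, hpv⟩ : V) = t.length + 1 := by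
        show (Lt.b y :: t).length = t.length + 1
        simp
      rw [hlv] at hlen
      have hlm : lenV m = t.length := rfl
      have hdec : mHom Ht u (Sum.inl ⟨⟨.b y :: t, hPv⟩, hpv⟩)
          = mHom Ht u m ≫ mHom Ht m (Sum.inl ⟨⟨.b y :: t, hPv⟩, hpv⟩) :=
        (mHom_comp Ht u m _).symm
      rw [hdec, CategoryTheory.Functor.map_comp, CategoryTheory.Functor.map_comp,
        SingleObj.comp_as_mul, SingleObj.comp_as_mul]
      have e1 : F₁.map (mHom Ht u m) = F₂.map (mHom Ht u m) := by
        rcases Nat.lt_or_ge t.length n with hlt | hge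
        · exact ih t.length hlt u m hlm.le
        · omega
      have e2 := maps_adjBA Ht F₁ F₂ hgen ⟨.b y :: t, hPv⟩
      rw [← hv] at e2
      rw [e1, e2]
  · match lstv, hPv, hqv, hlen with
    | .b y :: t, hPv, hqv, hlen => exact absurd hqv (by simp [headIsB])
    | [], hPv, hqv, hlen =>
      have hv : (Sum.inr ⟨⟨[], hPv⟩, hqv⟩ : V) = Sum.inr (endBv emptyNF) :=
        congrArg Sum.inr (Subtype.ext (Subtype.ext rfl))
      have hdec : mHom Ht u (Sum.inr ⟨⟨[], hPv⟩, hqv⟩)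
          = mHom Ht u vbase ≫ mHom Ht vbase (Sum.inr ⟨⟨[], hPv⟩, hqv⟩) :=
        (mHom_comp Ht u vbase _).symm
      rw [hdec, CategoryTheory.Functor.map_comp, CategoryTheory.Functor.map_comp,
        SingleObj.comp_as_mul, SingleObj.comp_as_mul]
      have e1 : F₁.map (mHom Ht u vbase) = F₂.map (mHom Ht u vbase) :=
        maps_to_baseA Ht F₁ F₂ hgen (lenV u) u le_rfl
      have e2 : F₁.map (mHom Ht vbase (Sum.inr ⟨⟨[], hPv⟩, hqv⟩))
          = F₂.map (mHom Ht vbase (Sum.inr ⟨⟨[], hPv⟩, hqv⟩)) := by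
        have hb : vbase = Sum.inl (endAv emptyNF) :=
          congrArg Sum.inl (Subtype.ext (Subtype.ext rfl))
        rw [hv, hb]
        exact maps_adjAB Ht F₁ F₂ hgen emptyNF
      rw [e1, e2]
    | .a :: t, hPv, hqv, hlen =>
      have hv : (Sum.inr ⟨⟨.a :: t, hPv⟩, hqv⟩ : V) = Sum.inr (endBv ⟨.a :: t, hPv⟩) :=
        congrArg Sum.inr (Subtype.ext (Subtype.ext rfl))
      set m : V := Sum.inl (endAv ⟨.a :: t, hPv⟩) with hm
      have hlv : lenV (Sum.inr ⟨⟨.a :: t, hPv⟩, hqv⟩ : V) = t.length + 1 := by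
        show (Lt.a :: t).length = t.length + 1
        simp
      rw [hlv] at hlen
      have hlm : lenV m = t.length := rfl
      have hdec : mHom Ht u (Sum.inr ⟨⟨.a :: t, hPv⟩, hqv⟩)
          = mHom Ht u m ≫ mHom Ht m (Sum.inr ⟨⟨.a :: t, hPv⟩, hqv⟩) :=
        (mHom_comp Ht u m _).symm
      rw [hdec, CategoryTheory.Functor.map_comp, CategoryTheory.Functor.map_comp,
        SingleObj.comp_as_mul, SingleObj.comp_as_mul]
      have e1 : F₁.map (mHom Ht u m) = F₂.map (mHom Ht u m) := by
        rcases Nat.lt_or_ge t.length n with hlt | hge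
        · exact ih t.length hlt u m hlm.le
        · omega
      have e2 := maps_adjAB Ht F₁ F₂ hgen ⟨.a :: t, hPv⟩
      rw [← hv] at e2
      rw [e1, e2]

omit hgen in
lemma map_transfer (F : Ob Ht ⥤ SingleObj X) {x x' y y' : Ob Ht} (hx : x' = x) (hy : y' = y)
    (f : x ⟶ y) (g : x' ⟶ y') (hval : f.1 = g.1) : F.map f = F.map g := by
  subst hx
  subst hy
  have : f = g := Subtype.ext hval
  rw [this]

lemma maps_all {x y : Ob Ht} (ff : x ⟶ y) : F₁.map ff = F₂.map ff := by
  obtain ⟨v, hv⟩ := ff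
  obtain ⟨u, hu⟩ : ∃ u : V, mkOb Ht u = x := ⟨Quotient.out x, mkOb_out Ht x⟩
  subst hu
  have h1 : mkOb Ht (Quotient.out (mkOb Ht u)) = mkOb Ht u := mkOb_out Ht (mkOb Ht u)
  have hval : (mHom Ht (Quotient.out (mkOb Ht u)) v).1 = v := by
    show actV (trv Ht (Quotient.out (mkOb Ht u))
      (Quotient.out (mkOb Ht (Quotient.out (mkOb Ht u))))) v = v
    have h2 : Quotient.out (mkOb Ht (Quotient.out (mkOb Ht u))) = Quotient.out (mkOb Ht u) :=
      congrArg Quotient.out h1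
    rw [h2, trv_refl, actV_one]
  calc F₁.map (show mkOb Ht u ⟶ y from ⟨v, hv⟩)
      = F₁.map (mHom Ht (Quotient.out (mkOb Ht u)) v) :=
        map_transfer Ht F₁ h1 hv (show mkOb Ht u ⟶ y from ⟨v, hv⟩) _ hval.symm
    _ = F₂.map (mHom Ht (Quotient.out (mkOb Ht u)) v) :=
        maps_mHom Ht F₁ F₂ hgen (lenV v) _ v le_rfl
    _ = F₂.map (show mkOb Ht u ⟶ y from ⟨v, hv⟩) :=
        (map_transfer Ht F₂ h1 hv (show mkOb Ht u ⟶ y from ⟨v, hv⟩) _ hval.symm).symm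

end Uniq

/-! ### The free groupoid instance and conclusion -/

open CategoryTheory

instance freeGrpd : IsFreeGroupoid (Ob Ht) where
  quiverGenerators := ⟨fun x y => Arr Ht x y⟩
  of := fun {a b} e => ofArr Ht e
  unique_lift := by
    intro X _ f
    refine ⟨funcF Ht X (fun x y e => (f e)⁻¹), ?_, ?_⟩
    · intro a b g
      show (funcF Ht X (fun x y e => (f e)⁻¹)).map (ofArr Ht g) = f g
      erw [funcF_map_ofArr, Fq_label]
      rw [inv_inv]
    · intro F' hF'
      have hgen : ∀ (x y : Ob Ht) (e : Arr Ht x y),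
          F'.map (ofArr Ht e) = (funcF Ht X (fun x y e => (f e)⁻¹)).map (ofArr Ht e) := by
        intro x y e
        have h1 : F'.map (ofArr Ht e) = f e := hF' x y e
        have h2 : (funcF Ht X (fun x y e => (f e)⁻¹)).map (ofArr Ht e) = f e := by
          rw [funcF_map_ofArr, Fq_label]
          rw [inv_inv]
        rw [h1, h2]
      apply CategoryTheory.Functor.ext
      · intro x y ff
        rw [maps_all Ht F' (funcF Ht X (fun x y e => (f e)⁻¹)) hgen ff]
        simp
      · intro x
        rfl

def xbase : Ob Ht := mkOb Ht vbase

lemma exists_xbase_out (f : End (xbase Ht)) :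
    ∃ k : Ht.1, actV k (Quotient.out (xbase Ht)) = f.1 :=
  exists_actV_of_eq Ht ((mkOb_out Ht (xbase Ht)).trans f.2.symm)

def endEquiv : End (xbase Ht) ≃* Ht.1 where
  toFun f := (trv Ht (Quotient.out (xbase Ht)) f.1)⁻¹
  invFun k := ⟨actV k⁻¹ (Quotient.out (xbase Ht)), by rw [mkOb_actV, mkOb_out]⟩
  left_inv f := by
    apply Subtype.ext
    show actV ((trv Ht (Quotient.out (xbase Ht)) f.1)⁻¹)⁻¹ (Quotient.out (xbase Ht)) = f.1
    rw [inv_inv]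
    exact trv_spec Ht (exists_xbase_out Ht f)
  right_inv k := by
    show (trv Ht (Quotient.out (xbase Ht)) (actV k⁻¹ (Quotient.out (xbase Ht))))⁻¹ = k
    rw [trv_uniq Ht k⁻¹ rfl, inv_inv]
  map_mul' f g := by
    have hcomp : (f * g).1 = actV (trv Ht (Quotient.out (xbase Ht)) g.1) f.1 := by
      rw [End.mul_def]
      exact comp_val Ht g f
    show (trv Ht (Quotient.out (xbase Ht)) (f * g).1)⁻¹
      = (trv Ht (Quotient.out (xbase Ht)) f.1)⁻¹ * (trv Ht (Quotient.out (xbase Ht)) g.1)⁻¹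
    rw [hcomp, trv_act Ht _ (exists_xbase_out Ht f), mul_inv_rev]

end TFS

/-- Every torsion-free subgroup of `G` is a free group. -/
theorem torsionFree_subgroup_of_G_is_free (H : Subgroup G)
    (hH : ∀ h : H, h ≠ 1 → ¬ IsOfFinOrder h) :
    ∃ ι : Type, Nonempty (FreeGroup ι ≃* H) := by
  let Ht : TFS.TFSub := ⟨H, hH⟩
  haveI hfree : IsFreeGroup (CategoryTheory.End (TFS.xbase Ht)) :=
    IsFreeGroupoid.endIsFreeOfConnectedFree _
  refine ⟨IsFreeGroup.Generators (CategoryTheory.End (TFS.xbase Ht)), ⟨?_⟩⟩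
  exact (IsFreeGroup.toFreeGroup (CategoryTheory.End (TFS.xbase Ht))).symm.trans
    (TFS.endEquiv Ht)
end
end

section
/- The commutator subgroup [G,G] of G is a free group freely generated by the two elements αβαβ⁻¹ and αβ⁻¹αβ; precisely, the group homomorphism from the free group on two generators to G sending the two generators to αβαβ⁻¹ and αβ⁻¹αβ respectively is injective, and its range equals the commutator subgroup [G,G]. -/
/-- `α` is the image in `G` of the generator of the `ℤ/2ℤ` factor. -/
def α : G := Monoid.Coprod.inl (Multiplicative.ofAdd (1 : ZMod 2))

/-- `β` is the image in `G` of the generator of the `ℤ/3ℤ` factor. -/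
def β : G := Monoid.Coprod.inr (Multiplicative.ofAdd (1 : ZMod 3))

/-- The homomorphism from the free group on two generators to `G` sending the
generators to `αβαβ⁻¹` and `αβ⁻¹αβ` respectively. -/
noncomputable def f : FreeGroup Bool →* G :=
  FreeGroup.lift (fun x => if x then α * β * α * β⁻¹ else α * β⁻¹ * α * β)

namespace CSF

/-! ### The set of irrational numbers and three Möbius permutations -/

abbrev Ir : Type := {r : ℝ // Irrational r}

lemma Ir.ne_rat (t : Ir) (q : ℚ) : (t : ℝ) ≠ (q : ℝ) := fun h => t.2 ⟨q, h.symm⟩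

lemma Ir.irr_add_one (t : Ir) : Irrational ((t : ℝ) + 1) := by
  simpa using irrational_add_ratCast_iff (q := 1).mpr t.2

lemma Ir.irr_sub_one (t : Ir) : Irrational ((t : ℝ) - 1) := by
  simpa using irrational_sub_ratCast_iff (q := 1).mpr t.2

noncomputable def S : Equiv.Perm Ir :=
  Function.Involutive.toPerm (fun t => ⟨-(t : ℝ)⁻¹, t.2.inv.neg⟩)
    (fun t => by ext; simp [inv_neg, inv_inv])

noncomputable def U : Equiv.Perm Ir where
  toFun t := ⟨-((t : ℝ) + 1)⁻¹, (t.irr_add_one).inv.neg⟩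
  invFun t := ⟨-((t : ℝ))⁻¹ - 1, by simpa using irrational_sub_ratCast_iff (q := 1).mpr t.2.inv.neg⟩
  left_inv t := by ext; simp [inv_neg, inv_inv]
  right_inv t := by ext; simp [inv_neg, inv_inv]

end CSF

namespace CSF

lemma Ir.ne_zero (t : Ir) : (t : ℝ) ≠ 0 := by
  have := t.ne_rat 0; simpa using this

lemma Ir.add_one_ne (t : Ir) : (t : ℝ) + 1 ≠ 0 := fun h => t.ne_rat (-1) (by push_cast; linarith)

lemma Ir.two_add_one_ne (t : Ir) : 2 * (t : ℝ) + 1 ≠ 0 := fun h => t.ne_rat (-1/2) (by push_cast; linarith)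

lemma Ir.sub_one_ne (t : Ir) : (t : ℝ) - 1 ≠ 0 := fun h => t.ne_rat 1 (by push_cast; linarith)

lemma Ir.sub_two_ne (t : Ir) : (t : ℝ) - 2 ≠ 0 := fun h => t.ne_rat 2 (by push_cast; linarith)

lemma Ir.add_two_ne (t : Ir) : (t : ℝ) + 2 ≠ 0 := fun h => t.ne_rat (-2) (by push_cast; linarith)

lemma S_sq : S * S = 1 := by
  ext t
  show ((S (S t) : Ir) : ℝ) = t
  simp [S, Function.Involutive.toPerm, inv_neg, inv_inv]

lemma U_cube : U * U * U = 1 := by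
  ext t
  show ((U (U (U t)) : Ir) : ℝ) = t
  have h0 := t.ne_zero
  have h1 := t.add_one_ne
  show -(-(-((t : ℝ) + 1)⁻¹ + 1)⁻¹ + 1)⁻¹ = t
  field_simp
  rw [show (-1 : ℝ) + ((t : ℝ) + 1) = t by ring]
  field_simp
  ring

/-- Homomorphism from `Multiplicative (ZMod n)` sending generator to a given element
of order dividing `n`. -/
def zmodHom (n : ℕ) [NeZero n] {H : Type*} [Monoid H] (σ : H) (h : σ ^ n = 1) :
    Multiplicative (ZMod n) →* H where
  toFun g := σ ^ (Multiplicative.toAdd g).val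
  map_one' := by
    show σ ^ (0 : ZMod n).val = 1
    simp
  map_mul' a b := by
    show σ ^ ((Multiplicative.toAdd a + Multiplicative.toAdd b).val) = _
    rw [ZMod.val_add, ← pow_eq_pow_mod _ h, pow_add]

noncomputable def ψ : G →* Equiv.Perm Ir :=
  Monoid.Coprod.lift (zmodHom 2 S (by rw [pow_two, S_sq]))
    (zmodHom 3 U (by rw [pow_succ, pow_two, U_cube]))

lemma ψα : ψ α = S := by
  show Monoid.Coprod.lift _ _ (Monoid.Coprod.inl _) = S
  rw [Monoid.Coprod.lift_apply_inl]
  show S ^ (1 : ZMod 2).val = S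
  rw [show (1 : ZMod 2).val = 1 from rfl, pow_one]

lemma ψβ : ψ β = U := by
  show Monoid.Coprod.lift _ _ (Monoid.Coprod.inr _) = U
  rw [Monoid.Coprod.lift_apply_inr]
  show U ^ (1 : ZMod 3).val = U
  rw [show (1 : ZMod 3).val = 1 from rfl, pow_one]

noncomputable instance : MulAction G Ir := MulAction.compHom _ ψ

lemma smul_def (g : G) (t : Ir) : g • t = ψ g t := rfl

end CSF

namespace CSF

lemma hα2 : α * α = 1 := by
  have h : (Multiplicative.ofAdd (1 : ZMod 2)) * (Multiplicative.ofAdd (1 : ZMod 2)) = 1 := by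
    decide
  show Monoid.Coprod.inl _ * Monoid.Coprod.inl _ = 1
  rw [← map_mul, h, map_one]

lemma hβ3 : β * (β * β) = 1 := by
  have h : (Multiplicative.ofAdd (1 : ZMod 3)) *
      ((Multiplicative.ofAdd (1 : ZMod 3)) * (Multiplicative.ofAdd (1 : ZMod 3))) = 1 := by
    decide
  show Monoid.Coprod.inr _ * (Monoid.Coprod.inr _ * Monoid.Coprod.inr _) = 1
  rw [← map_mul, ← map_mul, h, map_one]

lemma hαinv : α⁻¹ = α := inv_eq_of_mul_eq_one_right hα2

lemma hβinv : β⁻¹ = β * β := inv_eq_of_mul_eq_one_right hβ3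

lemma cα (z : G) : α * (α * z) = z := by rw [← mul_assoc, hα2, one_mul]

lemma cβ (z : G) : β * (β * (β * z)) = z := by
  rw [← mul_assoc, ← mul_assoc, mul_assoc β β β, hβ3, one_mul]

lemma x_inv : (α * β * α * β⁻¹)⁻¹ = β * α * β⁻¹ * α := by
  simp only [mul_inv_rev, inv_inv, hαinv, hβinv, mul_assoc, cα, cβ, hα2, hβ3, mul_one]

lemma y_inv : (α * β⁻¹ * α * β)⁻¹ = β⁻¹ * α * β * α := by
  simp only [mul_inv_rev, inv_inv, hαinv, hβinv, mul_assoc, cα, cβ, hα2, hβ3, mul_one]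

end CSF

namespace CSF

lemma x_smul (t : Ir) :
    (((α * β * α * β⁻¹) • t : Ir) : ℝ) = (2 * t + 1) / ((t : ℝ) + 1) := by
  have h0 := t.ne_zero; have h1 := t.add_one_ne; have h2 := t.two_add_one_ne
  rw [smul_def, map_mul, map_mul, map_inv, ψα, ψβ]
  simp only [Equiv.Perm.mul_apply]
  show -(-(-(-(t : ℝ)⁻¹ - 1)⁻¹ + 1)⁻¹)⁻¹ = (2 * t + 1) / ((t : ℝ) + 1)
  have e1 : -(t : ℝ)⁻¹ - 1 = -((t + 1) / t) := by field_simp; ring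
  have e3 : -(-(t : ℝ)⁻¹ - 1)⁻¹ = (t : ℝ) / (t + 1) := by
    rw [e1, inv_neg, inv_div, neg_neg]
  have e2 : (t : ℝ) / (t + 1) + 1 = (2 * t + 1) / (t + 1) := by field_simp; ring
  rw [e3, e2, inv_div, inv_neg, inv_div, neg_neg]

end CSF

namespace CSF

lemma xinv_smul (t : Ir) :
    ((((α * β * α * β⁻¹)⁻¹) • t : Ir) : ℝ) = ((t : ℝ) - 1) / (2 - t) := by
  have h0 := t.ne_zero; have h1 := t.sub_one_ne; have h2 := t.sub_two_ne
  rw [x_inv, smul_def, map_mul, map_mul, map_mul, map_inv, ψα, ψβ]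
  simp only [Equiv.Perm.mul_apply]
  show -(-(-(-(t : ℝ)⁻¹)⁻¹ - 1)⁻¹ + 1)⁻¹ = ((t : ℝ) - 1) / (2 - t)
  have e1 : -(-(t : ℝ)⁻¹)⁻¹ = (t : ℝ) := by rw [inv_neg, neg_neg, inv_inv]
  rw [e1]
  have e2 : -((t : ℝ) - 1)⁻¹ + 1 = ((t : ℝ) - 2) / (t - 1) := by field_simp; ring
  rw [e2, inv_div]
  have h3 : (2 : ℝ) - t ≠ 0 := fun h => h2 (by linarith)
  field_simp
  ring

lemma y_smul (t : Ir) :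
    (((α * β⁻¹ * α * β) • t : Ir) : ℝ) = ((t : ℝ) + 1) / ((t : ℝ) + 2) := by
  have h1 := t.add_one_ne; have h2 := t.add_two_ne
  rw [smul_def, map_mul, map_mul, map_mul, map_inv, ψα, ψβ]
  simp only [Equiv.Perm.mul_apply]
  show -(-(-(-((t : ℝ) + 1)⁻¹)⁻¹)⁻¹ - 1)⁻¹ = ((t : ℝ) + 1) / ((t : ℝ) + 2)
  have e1 : -(-((t : ℝ) + 1)⁻¹)⁻¹ = (t : ℝ) + 1 := by rw [inv_neg, neg_neg, inv_inv]
  rw [e1]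
  have e2 : -((t : ℝ) + 1)⁻¹ - 1 = -(((t : ℝ) + 2) / (t + 1)) := by field_simp; ring
  rw [e2, inv_neg, inv_div, neg_neg]

lemma yinv_smul (t : Ir) :
    ((((α * β⁻¹ * α * β)⁻¹) • t : Ir) : ℝ) = (2 * (t : ℝ) - 1) / (1 - t) := by
  have h0 := t.ne_zero; have h1 := t.sub_one_ne
  rw [y_inv, smul_def, map_mul, map_mul, map_mul, map_inv, ψα, ψβ]
  simp only [Equiv.Perm.mul_apply]
  show -(-(-(-(t : ℝ)⁻¹ + 1)⁻¹)⁻¹)⁻¹ - 1 = (2 * (t : ℝ) - 1) / (1 - t)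
  have e1 : -(-(-(-(t : ℝ)⁻¹ + 1)⁻¹)⁻¹)⁻¹ = -(-(t : ℝ)⁻¹ + 1)⁻¹ := by
    rw [inv_neg, neg_neg, inv_inv]
  rw [e1]
  have e2 : -(t : ℝ)⁻¹ + 1 = ((t : ℝ) - 1) / t := by field_simp; ring
  rw [e2, inv_div]
  have h3 : (1 : ℝ) - t ≠ 0 := fun h => h1 (by linarith)
  field_simp
  ring

end CSF

namespace CSF

noncomputable def pa : Bool → G := fun x => if x then α * β * α * β⁻¹ else α * β⁻¹ * α * β

def pX : Bool → Set Ir := fun b => if b then {t | 1 < (t : ℝ)} else {t | 0 < (t : ℝ) ∧ (t : ℝ) < 1}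

def pY : Bool → Set Ir := fun b => if b then {t | -1 < (t : ℝ) ∧ (t : ℝ) < 0} else {t | (t : ℝ) < -1}

lemma Ir.lt_or_gt (t : Ir) (q : ℚ) : (t : ℝ) < q ∨ (q : ℝ) < t := (t.ne_rat q).lt_or_gt

lemma sqrt2_bounds : 1 < Real.sqrt 2 ∧ Real.sqrt 2 < 2 := by
  constructor <;>
    nlinarith [Real.sq_sqrt (show (0:ℝ) ≤ 2 by norm_num), Real.sqrt_nonneg 2]

lemma hXne : ∀ i, (pX i).Nonempty := by
  obtain ⟨hs1, hs2⟩ := sqrt2_bounds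
  intro i
  cases i
  · exact ⟨⟨Real.sqrt 2 - 1, by simpa using irrational_sub_ratCast_iff (q := 1).mpr irrational_sqrt_two⟩,
      by constructor <;> simp [pX] <;> linarith⟩
  · exact ⟨⟨Real.sqrt 2, irrational_sqrt_two⟩, by simp [pX]; linarith⟩

lemma hXd : Pairwise (Function.onFun Disjoint pX) := by
  intro i j hij
  cases i <;> cases j <;> simp_all <;>
    · rw [Function.onFun, Set.disjoint_left]
      intro t h1 h2
      simp [pX] at h1 h2
      try exact absurd (h1.2.trans h2) (lt_irrefl _)
      try exact absurd (h2.2.trans h1) (lt_irrefl _)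

lemma hYd : Pairwise (Function.onFun Disjoint pY) := by
  intro i j hij
  cases i <;> cases j <;> simp_all <;>
    · rw [Function.onFun, Set.disjoint_left]
      intro t h1 h2
      simp [pY] at h1 h2
      try linarith [h1.1, h2]
      try linarith [h2.1, h1]

lemma hXYd : ∀ i j, Disjoint (pX i) (pY j) := by
  intro i j
  cases i <;> cases j <;>
    · rw [Set.disjoint_left]
      intro t h1 h2
      simp [pX, pY] at h1 h2
      first
        | linarith [h1.1, h1.2, h2.1, h2.2]
        | linarith [h1.1, h1.2, h2]
        | linarith [h1, h2.1, h2.2]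
        | linarith [h1, h2]

end CSF

namespace CSF

open Pointwise

lemma hXmaps : ∀ i, pa i • (pY i)ᶜ ⊆ pX i := by
  intro i s hs
  obtain ⟨t, ht, rfl⟩ := hs
  cases i
  · -- i = false : y acts, Y false = {t < -1}, X false = (0,1)
    simp only [pY, if_neg Bool.false_ne_true, Set.mem_compl_iff, Set.mem_setOf_eq, not_lt] at ht
    have ht' : (-1 : ℝ) < t := by
      rcases t.lt_or_gt (-1) with h | h
      · exact absurd ht (by push_cast at h ⊢; linarith)
      · push_cast at h; linarith
    show pa false • t ∈ pX false
    simp only [pa, pX, if_neg Bool.false_ne_true, Set.mem_setOf_eq]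
    rw [y_smul]
    constructor
    · apply div_pos <;> linarith
    · rw [div_lt_one (by linarith)]; linarith
  · simp only [pY, if_pos, Set.mem_compl_iff, Set.mem_setOf_eq, not_and, not_lt] at ht
    show pa true • t ∈ pX true
    simp only [pa, pX, if_pos, Set.mem_setOf_eq]
    rw [x_smul]
    rcases t.lt_or_gt (-1) with h | h
    · push_cast at h
      rw [lt_div_iff_of_neg (by linarith)]
      linarith
    · push_cast at h
      have h0 : (0 : ℝ) < t := by
        rcases t.lt_or_gt 0 with h' | h'
        · have := ht h; push_cast at h'; linarith
        · push_cast at h'; linarith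
      rw [lt_div_iff₀ (by linarith)]
      linarith

lemma hYmaps : ∀ i, pa⁻¹ i • (pX i)ᶜ ⊆ pY i := by
  intro i s hs
  obtain ⟨t, ht, rfl⟩ := hs
  cases i
  · -- y⁻¹, X false = (0,1), target Y false = {< -1}
    simp only [pX, if_neg Bool.false_ne_true, Set.mem_compl_iff, Set.mem_setOf_eq, not_and,
      not_lt] at ht
    show pa⁻¹ false • t ∈ pY false
    simp only [pa, pY, Pi.inv_apply, if_neg Bool.false_ne_true, Set.mem_setOf_eq]
    rw [yinv_smul]
    rcases t.lt_or_gt 0 with h | h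
    · push_cast at h
      rw [div_lt_iff₀ (by linarith)]
      linarith
    · push_cast at h
      have h1 : (1 : ℝ) < t := by
        rcases t.lt_or_gt 1 with h' | h'
        · have := ht h; push_cast at h'; linarith
        · push_cast at h'; linarith
      rw [div_lt_iff_of_neg (by linarith)]
      linarith
  · -- x⁻¹, X true = (1,∞), target Y true = (-1,0)
    simp only [pX, if_pos, Set.mem_compl_iff, Set.mem_setOf_eq, not_lt] at ht
    have ht' : (t : ℝ) < 1 := by
      rcases t.lt_or_gt 1 with h | h
      · push_cast at h; linarith
      · exact absurd ht (by push_cast at h; simp; linarith)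
    show pa⁻¹ true • t ∈ pY true
    simp only [pa, pY, Pi.inv_apply, if_pos, Set.mem_setOf_eq]
    rw [xinv_smul]
    constructor
    · rw [lt_div_iff₀ (by linarith)]; linarith
    · apply div_neg_of_neg_of_pos <;> linarith

lemma f_injective : Function.Injective f :=
  FreeGroup.injective_lift_of_ping_pong pa pX pY hXne hXd hYd hXYd hXmaps hYmaps

end CSF

namespace CSF

lemma hf_true : f (FreeGroup.of true) = α * β * α * β⁻¹ := by simp [f]

lemma hf_false : f (FreeGroup.of false) = α * β⁻¹ * α * β := by simp [f]

lemma hgen : Subgroup.closure ({α, β} : Set G) = ⊤ := by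
  rw [eq_top_iff]
  rintro g -
  have hα : α ∈ Subgroup.closure ({α, β} : Set G) :=
    Subgroup.subset_closure (by simp)
  have hβ : β ∈ Subgroup.closure ({α, β} : Set G) :=
    Subgroup.subset_closure (by simp)
  induction g using Monoid.Coprod.induction_on with
  | inl m =>
    have hm : m = (Multiplicative.ofAdd (1 : ZMod 2)) ^ (Multiplicative.toAdd m).val := by
      revert m; decide
    rw [hm, map_pow]
    exact Subgroup.pow_mem _ hα _
  | inr n =>
    have hn : n = (Multiplicative.ofAdd (1 : ZMod 3)) ^ (Multiplicative.toAdd n).val := by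
      revert n; decide
    rw [hn, map_pow]
    exact Subgroup.pow_mem _ hβ _
  | mul x y hx hy => exact Subgroup.mul_mem _ hx hy

end CSF

namespace CSF

noncomputable def e₁ : FreeGroup Bool →* FreeGroup Bool :=
  FreeGroup.lift fun b => (FreeGroup.of b)⁻¹

noncomputable def e₂ : FreeGroup Bool →* FreeGroup Bool :=
  FreeGroup.lift fun b =>
    if b then (FreeGroup.of true)⁻¹ * FreeGroup.of false else (FreeGroup.of true)⁻¹

lemma conj_α (w : FreeGroup Bool) : α * f w * α⁻¹ = f (e₁ w) := by
  have h : (MulAut.conj α).toMonoidHom.comp f = f.comp e₁ := by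
    apply FreeGroup.ext_hom
    intro b
    cases b <;>
      simp [e₁, hf_true, hf_false, MulAut.conj_apply, hαinv, hβinv, mul_inv_rev, inv_inv,
        mul_assoc, cα, cβ, hα2, hβ3, mul_one]
  simpa [MulAut.conj_apply] using DFunLike.congr_fun h w

lemma conj_β (w : FreeGroup Bool) : β * f w * β⁻¹ = f (e₂ w) := by
  have h : (MulAut.conj β).toMonoidHom.comp f = f.comp e₂ := by
    apply FreeGroup.ext_hom
    intro b
    cases b <;>
      simp [e₂, hf_true, hf_false, MulAut.conj_apply, hαinv, hβinv, mul_inv_rev, inv_inv,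
        mul_assoc, cα, cβ, hα2, hβ3, mul_one]
  simpa [MulAut.conj_apply] using DFunLike.congr_fun h w

end CSF

namespace CSF

open scoped commutatorElement

lemma hnormal : f.range.Normal := by
  rw [← Subgroup.normalizer_eq_top_iff, eq_top_iff, ← hgen, Subgroup.closure_le]
  rintro g hg
  rw [SetLike.mem_coe, Subgroup.mem_normalizer_iff]
  rw [Set.mem_insert_iff, Set.mem_singleton_iff] at hg
  rcases hg with rfl | rfl
  · intro n
    constructor
    · rintro ⟨w, rfl⟩; exact ⟨e₁ w, (conj_α w).symm⟩
    · intro hn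
      rcases hn with ⟨w, hw⟩
      have h2 : α * (f w) * α⁻¹ ∈ f.range := ⟨e₁ w, (conj_α w).symm⟩
      rw [hw] at h2
      simpa [hαinv, mul_assoc, cα, hα2, mul_one] using h2
  · intro n
    constructor
    · rintro ⟨w, rfl⟩; exact ⟨e₂ w, (conj_β w).symm⟩
    · intro hn
      rcases hn with ⟨w, hw⟩
      have h2 : β * (f w) * β⁻¹ ∈ f.range := ⟨e₂ w, (conj_β w).symm⟩
      rw [hw] at h2
      rcases h2 with ⟨w2, hw2⟩
      have h3 : β * (f w2) * β⁻¹ ∈ f.range := ⟨e₂ w2, (conj_β w2).symm⟩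
      rw [hw2] at h3
      simpa [hβinv, mul_assoc, cβ, hβ3, mul_one] using h3

lemma comm_le : commutator G ≤ f.range := by
  haveI := hnormal
  have hsur : Function.Surjective (QuotientGroup.mk' f.range) :=
    QuotientGroup.mk'_surjective _
  have hQgen : Subgroup.closure
      ({((α : G) : G ⧸ f.range), ((β : G) : G ⧸ f.range)} : Set (G ⧸ f.range)) = ⊤ := by
    have := congrArg (Subgroup.map (QuotientGroup.mk' f.range)) hgen
    rwa [MonoidHom.map_closure, Set.image_pair, ← MonoidHom.range_eq_map,
      MonoidHom.range_eq_top.mpr hsur] at this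
  have hcommαβ : ((α : G) : G ⧸ f.range) * ((β : G) : G ⧸ f.range)
      = ((β : G) : G ⧸ f.range) * ((α : G) : G ⧸ f.range) := by
    rw [← QuotientGroup.mk_mul, ← QuotientGroup.mk_mul, QuotientGroup.eq]
    have h1 : (α * β⁻¹ * α * β)⁻¹ ∈ f.range :=
      f.range.inv_mem ⟨FreeGroup.of false, hf_false⟩
    have h2 : (α * β)⁻¹ * (β * α) = (α * β⁻¹ * α * β)⁻¹ := by
      simp [mul_inv_rev, hαinv, hβinv, mul_assoc, cα, cβ, hα2, hβ3, mul_one]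
    rwa [h2]
  have hgen_comm : ∀ s ∈ ({((α : G) : G ⧸ f.range), ((β : G) : G ⧸ f.range)} :
      Set (G ⧸ f.range)), ∀ q : G ⧸ f.range, s * q = q * s := by
    intro s hs q
    have hle : (⊤ : Subgroup (G ⧸ f.range)) ≤ Subgroup.centralizer {s} := by
      rw [← hQgen, Subgroup.closure_le]
      rintro z hz
      rw [Set.mem_insert_iff, Set.mem_singleton_iff] at hz hs
      rw [SetLike.mem_coe, Subgroup.mem_centralizer_iff]
      rintro g hg
      rw [Set.mem_singleton_iff] at hg
      subst hg
      rcases hz with rfl | rfl <;> rcases hs with rfl | rfl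
      · rfl
      · exact hcommαβ.symm
      · exact hcommαβ
      · rfl
    have := hle (Subgroup.mem_top q)
    rw [Subgroup.mem_centralizer_iff] at this
    exact (this s rfl)
  have habelian : ∀ q r : G ⧸ f.range, q * r = r * q := by
    intro q r
    have hle : (⊤ : Subgroup (G ⧸ f.range)) ≤ Subgroup.centralizer {r} := by
      rw [← hQgen, Subgroup.closure_le]
      intro z hz
      rw [SetLike.mem_coe, Subgroup.mem_centralizer_iff]
      rintro g hg
      rw [Set.mem_singleton_iff] at hg
      rw [hg]
      exact (hgen_comm z hz r).symm
    have := hle (Subgroup.mem_top q)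
    rw [Subgroup.mem_centralizer_iff] at this
    exact (this r rfl).symm
  rw [commutator_def]
  rw [Subgroup.commutator_le]
  intro g _ h _
  have hπ : ((⁅g, h⁆ : G) : G ⧸ f.range) = 1 := by
    have : ((⁅g, h⁆ : G) : G ⧸ f.range) = ⁅((g : G) : G ⧸ f.range), ((h : G) : G ⧸ f.range)⁆ :=
      map_commutatorElement (QuotientGroup.mk' f.range) g h
    rw [this, commutatorElement_eq_one_iff_commute]
    exact habelian _ _
  exact (QuotientGroup.eq_one_iff _).mp hπ

lemma range_le : f.range ≤ commutator G := by
  rintro g ⟨w, rfl⟩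
  induction w using FreeGroup.induction_on with
  | C1 => rw [map_one]; exact Subgroup.one_mem _
  | of b =>
    cases b
    · have h : α * β⁻¹ * α * β = ⁅α, β⁻¹⁆ := by
        rw [commutatorElement_def, hαinv, inv_inv]
      rw [hf_false, h,
        commutator_def]
      exact Subgroup.commutator_mem_commutator (Subgroup.mem_top _) (Subgroup.mem_top _)
    · have h : α * β * α * β⁻¹ = ⁅α, β⁆ := by
        rw [commutatorElement_def, hαinv]
      rw [hf_true, h,
        commutator_def]
      exact Subgroup.commutator_mem_commutator (Subgroup.mem_top _) (Subgroup.mem_top _)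
  | inv_of b ih => rw [map_inv]; exact Subgroup.inv_mem _ ih
  | mul x y hx hy => rw [map_mul]; exact Subgroup.mul_mem _ hx hy

end CSF


/-- The commutator subgroup `[G,G]` is free, freely generated by `αβαβ⁻¹` and `αβ⁻¹αβ`. -/
theorem commutator_subgroup_free :
    Function.Injective f ∧ f.range = commutator G :=
  ⟨CSF.f_injective, le_antisymm CSF.range_le CSF.comm_le⟩
end

section
/- Let c be a circular order on a group H and let F be a finite subset of H. Then (a) there exists an injection ι : F → S¹ such that for all pairwise distinct g₁, g₂, g₃ ∈ F, c(g₁,g₂,g₃) = 1 if and only if sbtw(ι g₁, ι g₂, ι g₃); and (b) for any two injections ι, ι' : F → S¹ with this property there is an orientation-preserving homeomorphism h of S¹ such that ι' = h ∘ ι. That is, a circular order of H determines the configuration of any finite subset of H. -/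
/-!
Cutting the circular order open at a base point `o` gives a linear order on `H` with `o` least
and `x < y ↔ c(o, x, y) = 1` otherwise; the cocycle identity shows that `c(x, y, z) = 1` exactly
when `x, y, z` are cyclically increasing in it, so listing `F` in this order on `[0, 1)` realizes
`c`. Conversely, two realizations rotated so that a common point sits at `0` list `F` in the same
order on `[0, 1)`; a piecewise linear increasing bijection of `ℝ` fixing `0` and `1` that matches
the two lists descends to an orientation preserving homeomorphism of the circle.
-/

/-- A circular order on a group `H`: a function `c : H³ → {-1,0,1} ⊆ ℤ` satisfying
the vanishing, cocycle and left-invariance conditions. -/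
def IsCircularOrder {H : Type*} [Group H] (c : H → H → H → ℤ) : Prop :=
  (∀ g₁ g₂ g₃ : H, c g₁ g₂ g₃ = -1 ∨ c g₁ g₂ g₃ = 0 ∨ c g₁ g₂ g₃ = 1) ∧
  (∀ g₁ g₂ g₃ : H, c g₁ g₂ g₃ = 0 ↔ g₁ = g₂ ∨ g₁ = g₃ ∨ g₂ = g₃) ∧
  (∀ g₁ g₂ g₃ g₄ : H, c g₂ g₃ g₄ - c g₁ g₃ g₄ + c g₁ g₂ g₄ - c g₁ g₂ g₃ = 0) ∧
  (∀ h g₁ g₂ g₃ : H, c (h * g₁) (h * g₂) (h * g₃) = c g₁ g₂ g₃)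

/-- The circle `ℝ/ℤ`. -/
abbrev S1 := UnitAddCircle

/-- A homeomorphism of the circle is orientation preserving if it preserves the
strict cyclic betweenness relation. -/
def OrientationPreserving (h : S1 ≃ₜ S1) : Prop :=
  ∀ x y z : S1, sbtw x y z → sbtw (h x) (h y) (h z)

/-- An injection `ι` of a finite subset `F` of `H` into the circle realizes the
circular order `c` if cyclic order of triples of distinct points matches `c`. -/
def RealizesOrder {H : Type*} [Group H] (c : H → H → H → ℤ) (F : Finset H)
    (ι : F → S1) : Prop :=
  ∀ g₁ g₂ g₃ : F, g₁ ≠ g₂ → g₁ ≠ g₃ → g₂ ≠ g₃ →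
    (c g₁ g₂ g₃ = 1 ↔ sbtw (ι g₁) (ι g₂) (ι g₃))

open Set Function

section CyclicallyOrdered

variable {α : Type*} {r : α → α → Prop} {a b c : α}

-- For `r = (· < ·)` this is the `sbtw` of `LinearOrder.toCircularOrder`.
def CyclicallyOrdered (r : α → α → Prop) (a b c : α) : Prop :=
  r a b ∧ r b c ∨ r b c ∧ r c a ∨ r c a ∧ r a b

lemma CyclicallyOrdered.or_swap [Std.Trichotomous r] (hab : a ≠ b) (hac : a ≠ c) (hbc : b ≠ c) :
    CyclicallyOrdered r a b c ∨ CyclicallyOrdered r a c b := by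
  unfold CyclicallyOrdered
  rcases trichotomous (r := r) a b with h₁ | h₁ | h₁ <;>
  rcases trichotomous (r := r) b c with h₂ | h₂ | h₂ <;>
  rcases trichotomous (r := r) a c with h₃ | h₃ | h₃ <;> simp_all

end CyclicallyOrdered

section Circle

lemma sbtw_coe_of_lt {x y z : ℝ} (hxy : x < y) (hyz : y < z) (hzx : z < x + 1) :
    sbtw (x : S1) y z := by
  refine sbtw_of_btw_not_btw ?_ ?_
  · rw [QuotientAddGroup.btw_coe_iff, (toIcoMod_eq_self _).2 ⟨hxy.le, hyz.trans hzx⟩,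
      (toIocMod_eq_self _).2 ⟨hxy.trans hyz, hzx.le⟩]
    exact hyz.le
  · rw [btw_cyclic, QuotientAddGroup.btw_coe_iff, not_le,
      (toIcoMod_eq_self _).2 ⟨(hxy.trans hyz).le, hzx⟩, (toIocMod_eq_self _).2 ⟨hxy, by linarith⟩]
    exact hyz

lemma sbtw_coe_iff_cyclicallyOrdered {θ x y z : ℝ} (hx : x ∈ Ico θ (θ + 1))
    (hy : y ∈ Ico θ (θ + 1)) (hz : z ∈ Ico θ (θ + 1)) :
    sbtw (x : S1) y z ↔ CyclicallyOrdered (· < ·) x y z := by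
  have hcyc : ∀ {x y z : ℝ}, x ∈ Ico θ (θ + 1) → y ∈ Ico θ (θ + 1) → z ∈ Ico θ (θ + 1) →
      CyclicallyOrdered (· < ·) x y z → sbtw (x : S1) y z := by
    rintro x y z ⟨hx₀, hx₁⟩ ⟨hy₀, hy₁⟩ ⟨hz₀, hz₁⟩ (⟨h₁, h₂⟩ | ⟨h₁, h₂⟩ | ⟨h₁, h₂⟩)
    · exact sbtw_coe_of_lt h₁ h₂ (by linarith)
    · exact sbtw_cyclic_right (sbtw_coe_of_lt h₁ h₂ (by linarith))
    · exact sbtw_cyclic_left (sbtw_coe_of_lt h₁ h₂ (by linarith))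
  refine ⟨fun h ↦ ?_, hcyc hx hy hz⟩
  have hxy : x ≠ y := by rintro rfl; exact sbtw_irrefl_left h
  have hxz : x ≠ z := by rintro rfl; exact sbtw_irrefl_left_right h
  have hyz : y ≠ z := by rintro rfl; exact sbtw_irrefl_right h
  refine (CyclicallyOrdered.or_swap hxy hxz hyz).resolve_right fun h' ↦ ?_
  exact sbtw_asymm h (sbtw_cyclic_left (hcyc hx hz hy h'))

lemma btw_add_left_iff (t x y z : S1) : btw (t + x) (t + y) (t + z) ↔ btw x y z := by
  induction t using QuotientAddGroup.induction_on
  induction x using QuotientAddGroup.induction_on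
  induction y using QuotientAddGroup.induction_on
  induction z using QuotientAddGroup.induction_on
  simp only [← QuotientAddGroup.mk_add, QuotientAddGroup.btw_coe_iff', add_sub_add_left_eq_sub]

lemma sbtw_add_left_iff (t x y z : S1) : sbtw (t + x) (t + y) (t + z) ↔ sbtw x y z := by
  simp only [sbtw_iff_btw_not_btw, btw_add_left_iff]

lemma exists_coe_eq_of_mem_Ico (x : S1) : ∃ t ∈ Ico (0 : ℝ) 1, (t : S1) = x :=
  ⟨AddCircle.equivIco 1 0 x, by simpa using (AddCircle.equivIco 1 0 x).2,
    AddCircle.coe_equivIco⟩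

lemma equivIco_lt_iff (x y : S1) :
    (AddCircle.equivIco 1 0 x : ℝ) < AddCircle.equivIco 1 0 y ↔
      sbtw 0 x y ∨ (x = 0 ∧ y ≠ 0) := by
  obtain ⟨p, hp, rfl⟩ := exists_coe_eq_of_mem_Ico x
  obtain ⟨q, hq, rfl⟩ := exists_coe_eq_of_mem_Ico y
  replace hp : p ∈ Ico (0 : ℝ) (0 + 1) := by simpa using hp
  replace hq : q ∈ Ico (0 : ℝ) (0 + 1) := by simpa using hq
  have h₀ : (0 : ℝ) ∈ Ico (0 : ℝ) (0 + 1) := by simp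
  rw [AddCircle.equivIco_coe_of_mem hp, AddCircle.equivIco_coe_of_mem hq,
    ← QuotientAddGroup.mk_zero, sbtw_coe_iff_cyclicallyOrdered h₀ hp hq,
    AddCircle.coe_eq_coe_iff_of_mem_Ico hp h₀, Ne, AddCircle.coe_eq_coe_iff_of_mem_Ico hq h₀]
  unfold CyclicallyOrdered
  grind

end Circle

section CircleHomeomorph

lemma OrientationPreserving.trans {φ ψ : S1 ≃ₜ S1} (hφ : OrientationPreserving φ)
    (hψ : OrientationPreserving ψ) : OrientationPreserving (φ.trans ψ) :=
  fun _ _ _ h ↦ hψ _ _ _ (hφ _ _ _ h)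

lemma orientationPreserving_addLeft (t : S1) : OrientationPreserving (Homeomorph.addLeft t) :=
  fun x y z ↦ (sbtw_add_left_iff t x y z).2

variable {f : ℝ ≃o ℝ}

lemma OrderIso.mapsTo_Ico_zero_one (h₀ : f 0 = 0) (h₁ : f 1 = 1) :
    MapsTo f (Ico 0 1) (Ico 0 1) := by
  intro t ht
  exact ⟨h₀ ▸ f.monotone ht.1, h₁ ▸ f.strictMono ht.2⟩

noncomputable def descendToCircle (f : ℝ ≃o ℝ) : S1 → S1 :=
  AddCircle.liftIco 1 0 fun t ↦ (f t : S1)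

lemma descendToCircle_coe {t : ℝ} (ht : t ∈ Ico 0 1) : descendToCircle f t = f t :=
  AddCircle.liftIco_zero_coe_apply ht

lemma continuous_descendToCircle (h₀ : f 0 = 0) (h₁ : f 1 = 1) : Continuous (descendToCircle f) :=
  AddCircle.liftIco_zero_continuous (by simp [h₀, h₁, AddCircle.coe_period])
    (continuous_quotient_mk'.comp f.continuous).continuousOn

lemma descendToCircle_symm_descendToCircle (h₀ : f 0 = 0) (h₁ : f 1 = 1) (x : S1) :
    descendToCircle f.symm (descendToCircle f x) = x := by
  obtain ⟨t, ht, rfl⟩ := exists_coe_eq_of_mem_Ico x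
  rw [descendToCircle_coe ht, descendToCircle_coe (OrderIso.mapsTo_Ico_zero_one h₀ h₁ ht),
    f.symm_apply_apply]

lemma sbtw_descendToCircle (h₀ : f 0 = 0) (h₁ : f 1 = 1) {x y z : S1} (h : sbtw x y z) :
    sbtw (descendToCircle f x) (descendToCircle f y) (descendToCircle f z) := by
  have hf := OrderIso.mapsTo_Ico_zero_one h₀ h₁
  obtain ⟨p, hp, rfl⟩ := exists_coe_eq_of_mem_Ico x
  obtain ⟨q, hq, rfl⟩ := exists_coe_eq_of_mem_Ico y
  obtain ⟨r, hr, rfl⟩ := exists_coe_eq_of_mem_Ico z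
  rw [descendToCircle_coe hp, descendToCircle_coe hq, descendToCircle_coe hr]
  rw [sbtw_coe_iff_cyclicallyOrdered (θ := 0) (by simpa using hp) (by simpa using hq)
    (by simpa using hr)] at h
  rw [sbtw_coe_iff_cyclicallyOrdered (θ := 0) (by simpa using hf hp) (by simpa using hf hq)
    (by simpa using hf hr)]
  simpa only [CyclicallyOrdered, f.lt_iff_lt] using h

noncomputable def circleHomeomorphOfLift (f : ℝ ≃o ℝ) (h₀ : f 0 = 0) (h₁ : f 1 = 1) : S1 ≃ₜ S1 where
  toFun := descendToCircle f
  invFun := descendToCircle f.symm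
  left_inv := descendToCircle_symm_descendToCircle h₀ h₁
  right_inv := descendToCircle_symm_descendToCircle (f := f.symm)
    (f.symm_apply_eq.2 h₀.symm) (f.symm_apply_eq.2 h₁.symm)
  continuous_toFun := continuous_descendToCircle h₀ h₁
  continuous_invFun := continuous_descendToCircle
    (f.symm_apply_eq.2 h₀.symm) (f.symm_apply_eq.2 h₁.symm)

lemma circleHomeomorphOfLift_coe (h₀ : f 0 = 0) (h₁ : f 1 = 1) {t : ℝ} (ht : t ∈ Ico 0 1) :
    circleHomeomorphOfLift f h₀ h₁ t = f t :=
  descendToCircle_coe ht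

lemma orientationPreserving_circleHomeomorphOfLift (h₀ : f 0 = 0) (h₁ : f 1 = 1) :
    OrientationPreserving (circleHomeomorphOfLift f h₀ h₁) :=
  fun _ _ _ ↦ sbtw_descendToCircle h₀ h₁

end CircleHomeomorph

section Interpolation

lemma OrderIso.exists_eqOn_Iic_apply_eq (f : ℝ ≃o ℝ) {m a b : ℝ} (hma : m < a) (hb : f m < b) :
    ∃ f' : ℝ ≃o ℝ, EqOn f' f (Iic m) ∧ f' a = b := by
  set k := (b - f m) / (a - m)
  have hk : 0 < k := div_pos (sub_pos.2 hb) (sub_pos.2 hma)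
  set F : ℝ → ℝ := fun t ↦ if t ≤ m then f t else f m + k * (t - m)
  have hF_Iic : EqOn F f (Iic m) := fun t ht ↦ if_pos ht
  have hF_Ici : EqOn F (fun t ↦ f m + k * (t - m)) (Ici m) := by
    intro t ht
    rcases (mem_Ici.1 ht).eq_or_lt with rfl | ht
    · simp [F]
    · exact if_neg (not_le.2 ht)
  have hmono : StrictMono F := by
    refine StrictMonoOn.Iic_union_Ici (a := m) ?_ ?_
    · exact (f.strictMono.strictMonoOn _).congr hF_Iic.symm
    · refine StrictMonoOn.congr (fun s _ t _ hst ↦ ?_) hF_Ici.symm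
      gcongr
  have hsurj : Surjective F := by
    intro y
    by_cases hy : y ≤ f m
    · refine ⟨f.symm y, hF_Iic ?_ |>.trans (f.apply_symm_apply y)⟩
      exact f.symm_apply_le.2 hy
    · refine ⟨m + (y - f m) / k, ?_⟩
      have hpos : 0 ≤ (y - f m) / k := div_nonneg (by linarith [not_le.1 hy]) hk.le
      rw [hF_Ici (le_add_of_nonneg_right hpos)]
      field_simp
      ring
  refine ⟨hmono.orderIsoOfSurjective F hsurj, hF_Iic, ?_⟩
  change F a = b
  rw [hF_Ici hma.le]
  dsimp only [k]
  rw [div_mul_cancel₀ _ (sub_ne_zero.2 hma.ne')]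
  ring

theorem exists_orderIso_eqOn (s : Finset ℝ) (g : ℝ → ℝ) (hg : StrictMonoOn g s) :
    ∃ f : ℝ ≃o ℝ, EqOn f g s := by
  induction s using Finset.induction_on_max with
  | empty => exact ⟨OrderIso.refl ℝ, by simp⟩
  | insert a s hlt ih =>
    rcases s.eq_empty_or_nonempty with rfl | hs
    · exact ⟨OrderIso.addRight (g a - a), by simp⟩
    obtain ⟨f, hf⟩ := ih (hg.mono (by simp))
    have hm := s.max'_mem hs
    obtain ⟨f', hf'm, hf'a⟩ := f.exists_eqOn_Iic_apply_eq (b := g a) (hlt _ hm)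
      (by rw [hf hm]; exact hg (by simp [hm]) (by simp) (hlt _ hm))
    refine ⟨f', fun x hx ↦ ?_⟩
    rcases Finset.mem_insert.1 hx with rfl | hx
    · exact hf'a
    · exact (hf'm (s.le_max' x hx)).trans (hf hx)

lemma exists_orderIso_map_one_comp_eq {α : Type*} [Finite α] {a b : α → ℝ}
    (ha : ∀ u, a u ∈ Ico 0 1) (hb : ∀ u, b u ∈ Ico 0 1) (hlt : ∀ u v, a u < a v ↔ b u < b v) :
    ∃ f : ℝ ≃o ℝ, f 1 = 1 ∧ f ∘ a = b := by
  classical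
  have := Fintype.ofFinite α
  have hfac : FactorsThrough b a := fun u v huv ↦
    le_antisymm (not_lt.1 fun h ↦ huv.not_gt ((hlt v u).2 h))
      (not_lt.1 fun h ↦ huv.not_lt ((hlt u v).2 h))
  set g := extend a b fun _ ↦ 1
  have hg (u : α) : g (a u) = b u := hfac.extend_apply _ _
  have hg_one : g 1 = 1 := extend_apply' _ _ _ fun ⟨u, hu⟩ ↦ (ha u).2.ne hu
  have hg_mono : StrictMonoOn g ↑(insert 1 (Finset.univ.image a)) := by
    intro p hp q hq hpq
    simp only [Finset.coe_insert, Finset.coe_image, Finset.coe_univ, image_univ, mem_insert_iff,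
      mem_range] at hp hq
    rcases hp with rfl | ⟨u, rfl⟩ <;> rcases hq with rfl | ⟨v, rfl⟩
    · exact absurd hpq (lt_irrefl _)
    · exact absurd hpq (not_lt.2 (ha v).2.le)
    · rw [hg, hg_one]; exact (hb u).2
    · rw [hg, hg]; exact (hlt u v).1 hpq
  obtain ⟨f, hf⟩ := exists_orderIso_eqOn _ g hg_mono
  exact ⟨f, (hf (by simp)).trans hg_one, funext fun u ↦ (hf (by simp)).trans (hg u)⟩

end Interpolation

section Uniqueness

variable {α : Type*} [Finite α] {ι ι' : α → S1}

lemma exists_orientationPreserving_comp_eq_of_eq_zero (hι : Injective ι) (hι' : Injective ι')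
    (hsbtw : ∀ a b c, sbtw (ι a) (ι b) (ι c) ↔ sbtw (ι' a) (ι' b) (ι' c)) {z : α}
    (hz : ι z = 0) (hz' : ι' z = 0) :
    ∃ φ : S1 ≃ₜ S1, OrientationPreserving φ ∧ ι' = φ ∘ ι := by
  set ρ : S1 → ℝ := fun x ↦ AddCircle.equivIco 1 0 x
  have hρ (x : S1) : ρ x ∈ Ico 0 1 := by simpa using (AddCircle.equivIco 1 0 x).2
  have hρ_coe (x : S1) : (ρ x : S1) = x := AddCircle.coe_equivIco
  have hρ_zero : ρ 0 = 0 := AddCircle.equivIco_coe_of_mem (y := 0) (by simp)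
  have hlt (u v : α) : ρ (ι u) < ρ (ι v) ↔ ρ (ι' u) < ρ (ι' v) := by
    have hzero (w : α) : ι w = 0 ↔ ι' w = 0 :=
      (by rw [← hz, hι.eq_iff] : ι w = 0 ↔ w = z).trans (by rw [← hz', hι'.eq_iff])
    have hsbtw_zero := hsbtw z u v
    rw [hz, hz'] at hsbtw_zero
    simp only [ρ, equivIco_lt_iff, hsbtw_zero, ne_eq, hzero]
  obtain ⟨f, h₁, hf⟩ := exists_orderIso_map_one_comp_eq (fun u ↦ hρ (ι u)) (fun u ↦ hρ (ι' u)) hlt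
  have h₀ : f 0 = 0 := by simpa [hz, hz', hρ_zero] using congrFun hf z
  refine ⟨circleHomeomorphOfLift f h₀ h₁, orientationPreserving_circleHomeomorphOfLift h₀ h₁,
    funext fun u ↦ ?_⟩
  calc ι' u = f (ρ (ι u)) := by rw [← hρ_coe (ι' u), ← congrFun hf u, comp_apply]
    _ = circleHomeomorphOfLift f h₀ h₁ (ι u) := by
      rw [← circleHomeomorphOfLift_coe h₀ h₁ (hρ _), hρ_coe]

theorem exists_orientationPreserving_comp_eq (hι : Injective ι) (hι' : Injective ι')
    (hsbtw : ∀ a b c, sbtw (ι a) (ι b) (ι c) ↔ sbtw (ι' a) (ι' b) (ι' c)) :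
    ∃ φ : S1 ≃ₜ S1, OrientationPreserving φ ∧ ι' = φ ∘ ι := by
  cases isEmpty_or_nonempty α
  · exact ⟨Homeomorph.refl S1, fun _ _ _ h ↦ h, funext isEmptyElim⟩
  obtain ⟨z⟩ := ‹Nonempty α›
  obtain ⟨φ, hφ, hφι⟩ := exists_orientationPreserving_comp_eq_of_eq_zero
    ((add_right_injective (-ι z)).comp hι) ((add_right_injective (-ι' z)).comp hι')
    (fun a b c ↦ by simp only [comp_apply, sbtw_add_left_iff, hsbtw]) (z := z)
    (neg_add_cancel (ι z)) (neg_add_cancel (ι' z))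
  refine ⟨(Homeomorph.addLeft (-ι z)).trans (φ.trans (Homeomorph.addLeft (ι' z))),
    (orientationPreserving_addLeft _).trans (hφ.trans (orientationPreserving_addLeft _)),
    funext fun u ↦ ?_⟩
  have hφu := congrFun hφι u
  simp only [comp_apply] at hφu
  simp [← hφu]

end Uniqueness

section Cocycle

variable {α : Type*}

structure IsCircularCocycle (c : α → α → α → ℤ) : Prop where
  trichotomy : ∀ x y z, c x y z = -1 ∨ c x y z = 0 ∨ c x y z = 1
  eq_zero_iff : ∀ x y z, c x y z = 0 ↔ x = y ∨ x = z ∨ y = z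
  cocycle : ∀ x y z w, c y z w - c x z w + c x y w - c x y z = 0

lemma IsCircularOrder.isCircularCocycle {H : Type*} [Group H] {c : H → H → H → ℤ}
    (hc : IsCircularOrder c) : IsCircularCocycle c :=
  ⟨hc.1, hc.2.1, hc.2.2.1⟩

def cutLT (c : α → α → α → ℤ) (o x y : α) : Prop :=
  c o x y = 1 ∨ (x = o ∧ y ≠ o)

namespace IsCircularCocycle

variable {c : α → α → α → ℤ}

lemma rotate (hc : IsCircularCocycle c) (x y z : α) : c y z x = c x y z := by
  have := hc.cocycle x y z x
  have h₁ := (hc.eq_zero_iff x z x).2 (by simp)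
  have h₂ := (hc.eq_zero_iff x y x).2 (by simp)
  omega

lemma swap (hc : IsCircularCocycle c) (x y z : α) : c x z y = -c x y z := by
  have := hc.cocycle x y x z
  have h₁ := (hc.eq_zero_iff x x z).2 (by simp)
  have h₂ := (hc.eq_zero_iff x y x).2 (by simp)
  have h₃ := hc.rotate y x z
  omega

lemma eq_one_of_eq_one_of_eq_one (hc : IsCircularCocycle c) {o x y z : α} (hxy : c o x y = 1)
    (hyz : c o y z = 1) : c o x z = 1 ∧ c x y z = 1 := by
  have := hc.cocycle o x y z
  have h₁ := hc.trichotomy x y z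
  have h₂ := hc.trichotomy o x z
  omega

lemma ne_of_cutLT (hc : IsCircularCocycle c) {o x y : α} (h : cutLT c o x y) : y ≠ o := by
  rintro rfl
  rcases h with h | ⟨-, h⟩
  · rw [(hc.eq_zero_iff y x y).2 (by simp)] at h
    exact zero_ne_one h
  · exact h rfl

lemma eq_one_of_cutLT (hc : IsCircularCocycle c) {o x y z : α} (hxy : cutLT c o x y)
    (hyz : cutLT c o y z) : c x y z = 1 := by
  have hyo := hc.ne_of_cutLT hxy
  have hoyz : c o y z = 1 := hyz.resolve_right fun h ↦ hyo h.1
  rcases eq_or_ne x o with rfl | hxo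
  · exact hoyz
  · exact (hc.eq_one_of_eq_one_of_eq_one (hxy.resolve_right fun h ↦ hxo h.1) hoyz).2

lemma isStrictTotalOrder_cutLT (hc : IsCircularCocycle c) (o : α) :
    IsStrictTotalOrder α (cutLT c o) where
  irrefl x := by
    rintro (h | ⟨rfl, h⟩)
    · rw [(hc.eq_zero_iff o x x).2 (by simp)] at h
      exact zero_ne_one h
    · exact h rfl
  trans x y z hxy hyz := by
    have hzo := hc.ne_of_cutLT hyz
    rcases eq_or_ne x o with rfl | hxo
    · exact Or.inr ⟨rfl, hzo⟩
    · exact Or.inl (hc.eq_one_of_eq_one_of_eq_one (hxy.resolve_right fun h ↦ hxo h.1)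
        (hyz.resolve_right fun h ↦ hc.ne_of_cutLT hxy h.1)).1
  trichotomous x y hxy hyx := by
    by_contra hne
    rcases eq_or_ne x o with rfl | hxo
    · exact hxy (Or.inr ⟨rfl, Ne.symm hne⟩)
    rcases eq_or_ne y o with rfl | hyo
    · exact hyx (Or.inr ⟨rfl, hne⟩)
    have h₀ : c o x y ≠ 0 := by
      rw [Ne, hc.eq_zero_iff]
      tauto
    have := hc.swap o x y
    rcases hc.trichotomy o x y with h | h | h
    · exact hyx (Or.inl (by omega))
    · exact h₀ h
    · exact hxy (Or.inl h)

lemma eq_one_iff_cyclicallyOrdered_cutLT (hc : IsCircularCocycle c) (o : α) {x y z : α}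
    (hxy : x ≠ y) (hxz : x ≠ z) (hyz : y ≠ z) :
    c x y z = 1 ↔ CyclicallyOrdered (cutLT c o) x y z := by
  have := hc.isStrictTotalOrder_cutLT o
  have hcyc : ∀ {x y z : α}, CyclicallyOrdered (cutLT c o) x y z → c x y z = 1 := by
    rintro x y z (⟨h₁, h₂⟩ | ⟨h₁, h₂⟩ | ⟨h₁, h₂⟩)
    · exact hc.eq_one_of_cutLT h₁ h₂
    · rw [← hc.rotate]
      exact hc.eq_one_of_cutLT h₁ h₂
    · rw [hc.rotate z x y]
      exact hc.eq_one_of_cutLT h₁ h₂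
  refine ⟨fun h ↦ (CyclicallyOrdered.or_swap hxy hxz hyz).resolve_right fun h' ↦ ?_, hcyc⟩
  have := hc.swap x y z
  have := hcyc h'
  omega

end IsCircularCocycle

end Cocycle

lemma exists_mem_Ico_lt_iff {α : Type*} (r : α → α → Prop) [IsStrictTotalOrder α r]
    (s : Finset α) : ∃ x : α → ℝ, (∀ a, x a ∈ Ico 0 1) ∧ ∀ a ∈ s, ∀ b ∈ s, r a b ↔ x a < x b := by
  classical
  set x : α → ℝ := fun a ↦ (s.filter (r · a)).card / (s.card + 1)
  have hmono : ∀ a ∈ s, ∀ b, r a b → x a < x b := by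
    intro a ha b hab
    have hsub : s.filter (r · a) ⊂ s.filter (r · b) := by
      refine ⟨fun y hy ↦ ?_, fun h ↦ irrefl a (Finset.mem_filter.1 (h (by simp [ha, hab]))).2⟩
      simp only [Finset.mem_filter] at hy ⊢
      exact ⟨hy.1, _root_.trans hy.2 hab⟩
    have := Finset.card_lt_card hsub
    simp only [x]
    gcongr
  refine ⟨x, fun a ↦ ⟨by positivity, ?_⟩, fun a ha b hb ↦ ⟨hmono a ha b, fun hlt ↦ ?_⟩⟩
  · rw [div_lt_one (by positivity)]
    exact_mod_cast Nat.lt_succ_of_le (Finset.card_filter_le _ _)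
  · rcases trichotomous_of r a b with h | rfl | h
    · exact h
    · exact absurd hlt (lt_irrefl _)
    · exact absurd hlt (hmono b hb a h).not_gt

theorem IsCircularCocycle.exists_injOn_sbtw_iff {α : Type*} [Nonempty α]
    {c : α → α → α → ℤ} (hc : IsCircularCocycle c) (s : Finset α) :
    ∃ ι : α → S1, InjOn ι s ∧ ∀ x ∈ s, ∀ y ∈ s, ∀ z ∈ s, x ≠ y → x ≠ z → y ≠ z →
      (c x y z = 1 ↔ sbtw (ι x) (ι y) (ι z)) := by
  set o := Classical.arbitrary α
  have := hc.isStrictTotalOrder_cutLT o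
  obtain ⟨t, ht, hlt⟩ := exists_mem_Ico_lt_iff (cutLT c o) s
  have ht' (x : α) : t x ∈ Ico 0 (0 + 1) := by simpa using ht x
  refine ⟨fun x ↦ (t x : S1), fun x hx y hy hxy ↦ ?_, fun x hx y hy z hz hxy hxz hyz ↦ ?_⟩
  · have htxy := (AddCircle.coe_eq_coe_iff_of_mem_Ico (ht' x) (ht' y)).1 hxy
    exact Std.Trichotomous.trichotomous (r := cutLT c o) x y
      (fun h ↦ ((hlt x hx y hy).1 h).ne htxy) (fun h ↦ ((hlt y hy x hx).1 h).ne' htxy)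
  · rw [hc.eq_one_iff_cyclicallyOrdered_cutLT o hxy hxz hyz,
      sbtw_coe_iff_cyclicallyOrdered (ht' x) (ht' y) (ht' z)]
    simp only [CyclicallyOrdered, hlt x hx y hy, hlt y hy z hz, hlt z hz x hx]

lemma RealizesOrder.sbtw_iff_sbtw {H : Type*} [Group H] {c : H → H → H → ℤ} {F : Finset H}
    {ι ι' : F → S1} (h : RealizesOrder c F ι) (h' : RealizesOrder c F ι') (x y z : F) :
    sbtw (ι x) (ι y) (ι z) ↔ sbtw (ι' x) (ι' y) (ι' z) := by
  rcases eq_or_ne x y with rfl | hxy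
  · simp only [sbtw_irrefl_left]
  rcases eq_or_ne x z with rfl | hxz
  · simp only [sbtw_irrefl_left_right]
  rcases eq_or_ne y z with rfl | hyz
  · simp only [sbtw_irrefl_right]
  rw [← h x y z hxy hxz hyz, h' x y z hxy hxz hyz]

/-- A circular order of `H` determines the configuration of any finite subset `F` of `H`:
a realizing injection `F → S¹` exists, and any two such differ by an
orientation-preserving homeomorphism of the circle. -/
theorem circular_order_determines_configuration
    {H : Type*} [Group H] (c : H → H → H → ℤ) (hc : IsCircularOrder c)
    (F : Finset H) :
    (∃ ι : F → S1, Function.Injective ι ∧ RealizesOrder c F ι) ∧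
    (∀ ι ι' : F → S1, Function.Injective ι → RealizesOrder c F ι →
      Function.Injective ι' → RealizesOrder c F ι' →
      ∃ h : S1 ≃ₜ S1, OrientationPreserving h ∧ ι' = ⇑h ∘ ι) := by
  refine ⟨?_, fun ι ι' hι hreal hι' hreal' ↦
    exists_orientationPreserving_comp_eq hι hι' (hreal.sbtw_iff_sbtw hreal')⟩
  obtain ⟨ι, hinj, hsbtw⟩ := hc.isCircularCocycle.exists_injOn_sbtw_iff F
  exact ⟨fun g ↦ ι g, fun g g' h ↦ Subtype.ext (hinj g.2 g'.2 h),
    fun g₁ g₂ g₃ h₁₂ h₁₃ h₂₃ ↦ hsbtw _ g₁.2 _ g₂.2 _ g₃.2 (Subtype.coe_ne_coe.2 h₁₂)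
      (Subtype.coe_ne_coe.2 h₁₃) (Subtype.coe_ne_coe.2 h₂₃)⟩
end
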